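/- arXiv:2203.00687 — 10 statements merged into one kernel-verified Lean document; each statement's English description precedes it below -/
import Mathlib

section
/- If every angle of triangle ABC is less than 120°, then the first isodynamic point S lies in the interior of triangle ABC. -/
/-!
Identify the plane with `ℂ`, put `A` at the origin and write `p, q, s` for `B, C, S`. The products
`s (p - q)`, `(s - p) q` and `(s - q) (-p)` sum to zero, and the Apollonius relations say that
they have equal norms; so they form an equilateral triangle, `(s - p) q = ω s (p - q)` for a
primitive cube root of unity `ω`, and `s (q - ω (p - q)) = p q` determines `s`. In these terms the
barycentric coordinate of `S` at `B` is a positive multiple of `D (D - 2 Im ω ⟪p, p - q⟫)` with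
`D = cross p q`, while the power of `S` with respect to the circumcircle is a positive multiple of
`Im ω · D`. Being inside the circumcircle forces `Im ω · D < 0` (the other choice of `ω` gives the
second isodynamic point), and then the coordinate at `B` is `sin B · sin (B + π/3) > 0` up to a
positive factor, i.e. positive exactly when `∠ B < 2π/3`. The same holds at `A` and `C` by
symmetry.
-/

open EuclideanGeometry Real

noncomputable section

abbrev Pt := EuclideanSpace ℝ (Fin 2)

/-- `S` is the first isodynamic point of triangle `ABC`: it lies on the three
Apollonius circles (e.g. the `A`-Apollonius circle is the locus of `P` with
`PB/PC = AB/AC`) and lies inside the circumcircle. -/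
def IsFirstIsodynamic (A B C S : Pt) : Prop :=
  dist S B * dist A C = dist S C * dist A B ∧
  dist S A * dist B C = dist S C * dist B A ∧
  dist S A * dist C B = dist S B * dist C A ∧
  ∃ O r, dist O A = r ∧ dist O B = r ∧ dist O C = r ∧ dist O S < r

theorem LinearIsometryEquiv.image_interior_convexHull {E F : Type*} [SeminormedAddCommGroup E]
    [NormedSpace ℝ E] [SeminormedAddCommGroup F] [NormedSpace ℝ F] (e : E ≃ₗᵢ[ℝ] F) (s : Set E) :
    e '' interior (convexHull ℝ s) = interior (convexHull ℝ (e '' s)) := by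
  rw [← e.coe_toHomeomorph, Homeomorph.image_interior, e.coe_toHomeomorph]
  exact congrArg interior (e.toLinearEquiv.toLinearMap.image_convexHull s)

theorem neg_mul_lt_two_inner_of_angle_lt {V : Type*} [NormedAddCommGroup V]
    [InnerProductSpace ℝ V] {x y : V} (hx : x ≠ 0) (hy : y ≠ 0)
    (h : InnerProductGeometry.angle x y < 2 * π / 3) : -(‖x‖ * ‖y‖) < 2 * inner ℝ x y := by
  have hcos : -(1 / 2) < cos (InnerProductGeometry.angle x y) := by
    have : cos (2 * π / 3) = -(1 / 2) := by
      rw [show 2 * π / 3 = π - π / 3 by ring, cos_pi_sub, cos_pi_div_three]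
    rw [← this]
    exact strictAntiOn_cos
      ⟨InnerProductGeometry.angle_nonneg x y, InnerProductGeometry.angle_le_pi x y⟩
      ⟨by positivity, by linarith [pi_pos]⟩ h
  have hxy : 0 < ‖x‖ * ‖y‖ := by positivity
  rw [← InnerProductGeometry.cos_angle_mul_norm_mul_norm]
  nlinarith

/-- In polar form `c = n cos θ`, `d = n sin θ`, and with `2 k = ∓√3` of sign opposite to `d`,
this says `sin θ · sin (θ + π/3) > 0` for `θ < 2π/3`. -/
theorem mul_sub_two_mul_mul_pos {k d c n : ℝ} (hk : 4 * k ^ 2 = 3) (hkd : k * d < 0)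
    (hn : n ^ 2 = c ^ 2 + d ^ 2) (hc : -n < 2 * c) : 0 < d * (d - 2 * k * c) := by
  have hd : 0 < d ^ 2 := by
    have : d ≠ 0 := by rintro rfl; simp at hkd
    positivity
  rcases le_or_gt 0 c with hc₀ | hc₀
  · nlinarith [mul_nonneg_of_nonpos_of_nonpos hkd.le (neg_nonpos.2 hc₀)]
  · have : 3 * c ^ 2 < d ^ 2 := by nlinarith
    nlinarith [sq_nonneg (2 * k * c - d)]

open ComplexConjugate

def cross (u v : ℂ) : ℝ := (conj u * v).im

theorem inner_sq_add_cross_sq (u v : ℂ) :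
    inner ℝ u v ^ 2 + cross u v ^ 2 = ‖u‖ ^ 2 * ‖v‖ ^ 2 := by
  simp only [Complex.inner, cross, Complex.sq_norm, Complex.normSq_apply, Complex.mul_re,
    Complex.mul_im, Complex.conj_re, Complex.conj_im]
  ring

theorem ne_of_cross_ne_zero {p q : ℂ} (h : cross p q ≠ 0) : p ≠ q := by
  rintro rfl
  exact h (by simp [cross, Complex.mul_im]; ring)

theorem cross_smul_eq_add (p q s : ℂ) : cross p q • s = cross s q • p + cross p s • q := by
  apply Complex.ext <;> simp [cross] <;> ring

theorem sq_add_mul_add_sq_eq_zero {x y : ℂ} (hy : ‖y‖ = ‖x‖) (hxy : ‖x + y‖ = ‖x‖) :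
    x ^ 2 + x * y + y ^ 2 = 0 := by
  rcases eq_or_ne x 0 with rfl | hx
  · simp_all
  have hnorm : ∀ z : ℂ, z * conj z = (‖z‖ : ℂ) ^ 2 := fun z => by
    rw [Complex.mul_conj, Complex.normSq_eq_norm_sq]; push_cast; ring
  have h₁ : y * conj y = x * conj x := by rw [hnorm, hnorm, hy]
  have h₂ : (x + y) * conj (x + y) = x * conj x := by rw [hnorm, hnorm, hxy]
  rw [map_add] at h₂
  have : conj x ^ 2 * (x ^ 2 + x * y + y ^ 2) = 0 := by
    linear_combination (conj x * y) * h₂ - (x * conj x + conj x * y) * h₁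
  simpa [hx] using this

theorem re_and_im_sq_of_sq_add_add_one_eq_zero {ω : ℂ} (h : ω ^ 2 + ω + 1 = 0) :
    ω.re = -1 / 2 ∧ 4 * ω.im ^ 2 = 3 := by
  have hre := congrArg Complex.re h
  have him := congrArg Complex.im h
  simp only [sq, Complex.mul_re, Complex.mul_im, Complex.add_re, Complex.add_im,
    Complex.one_re, Complex.one_im, Complex.zero_re, Complex.zero_im] at hre him
  have hhalf : ω.re = -1 / 2 := by
    have : ω.im * (2 * ω.re + 1) = 0 := by linear_combination him
    rcases mul_eq_zero.1 this with h0 | h0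
    · rw [h0] at hre; nlinarith [sq_nonneg (ω.re + 1 / 2)]
    · linarith
  refine ⟨hhalf, ?_⟩
  rw [hhalf] at hre
  linarith

theorem exists_cube_root_of_isodynamic {p q s : ℂ} (hs : s ≠ 0) (hpq : p ≠ q)
    (h₁ : ‖s - p‖ * ‖q‖ = ‖s - q‖ * ‖p‖) (h₂ : ‖s‖ * ‖p - q‖ = ‖s - q‖ * ‖p‖) :
    ∃ ω : ℂ, ω ^ 2 + ω + 1 = 0 ∧ s * (q - ω * (p - q)) = p * q := by
  have hx : s * (p - q) ≠ 0 := mul_ne_zero hs (sub_ne_zero.2 hpq)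
  have hsum : s * (p - q) + (s - p) * q = p * (s - q) := by ring
  have h := sq_add_mul_add_sq_eq_zero (x := s * (p - q)) (y := (s - p) * q)
    (by rw [norm_mul, norm_mul, h₁, h₂]) (by rw [hsum, norm_mul, norm_mul, h₂, mul_comm])
  refine ⟨(s - p) * q / (s * (p - q)), ?_, ?_⟩
  · field_simp
    linear_combination h
  · field_simp
    ring

theorem two_mul_cross_mul_norm_sq_eq {p q s ω : ℂ} (hω : ω.re = -1 / 2)
    (hsm : s * (q - ω * (p - q)) = p * q) :
    2 * cross s q * ‖q - ω * (p - q)‖ ^ 2 =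
        ‖q‖ ^ 2 * (cross p q - 2 * ω.im * inner ℝ p (p - q)) ∧
      2 * cross p s * ‖q - ω * (p - q)‖ ^ 2 =
        ‖p‖ ^ 2 * (cross p q - 2 * ω.im * inner ℝ q (q - p)) := by
  have hre := congrArg Complex.re hsm
  have him := congrArg Complex.im hsm
  simp only [Complex.mul_re, Complex.mul_im, Complex.sub_re, Complex.sub_im, hω] at hre him
  simp only [cross, Complex.inner, Complex.sq_norm, Complex.normSq_apply, Complex.mul_re,
    Complex.mul_im, Complex.sub_re, Complex.sub_im, Complex.conj_re, Complex.conj_im, hω]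
  set m₀ := q.re - (-1 / 2 * (p.re - q.re) - ω.im * (p.im - q.im))
  set m₁ := q.im - (-1 / 2 * (p.im - q.im) + ω.im * (p.re - q.re))
  constructor
  · linear_combination 2 * (q.im * m₀ + q.re * m₁) * hre + 2 * (q.im * m₁ - q.re * m₀) * him
  · linear_combination -2 * (p.im * m₀ + p.re * m₁) * hre - 2 * (p.im * m₁ - p.re * m₀) * him

theorem power_mul_cross_mul_norm_sq_eq {p q s w ω : ℂ} (hω : ω.re = -1 / 2)
    (hsm : s * (q - ω * (p - q)) = p * q) (hwp : ‖w - p‖ = ‖w‖) (hwq : ‖w - q‖ = ‖w‖) :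
    (‖w - s‖ ^ 2 - ‖w‖ ^ 2) * cross p q * ‖q - ω * (p - q)‖ ^ 2 =
      ω.im * (‖p‖ ^ 2 * ‖q‖ ^ 2 * ‖p - q‖ ^ 2) := by
  obtain ⟨hβ, hγ⟩ := two_mul_cross_mul_norm_sq_eq hω hsm
  set m := q - ω * (p - q)
  have hp : 2 * inner ℝ w p = ‖p‖ ^ 2 := by
    have := norm_sub_sq_real w p; rw [hwp] at this; linarith
  have hq : 2 * inner ℝ w q = ‖q‖ ^ 2 := by
    have := norm_sub_sq_real w q; rw [hwq] at this; linarith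
  have hcirc : 2 * inner ℝ w s * cross p q = cross s q * ‖p‖ ^ 2 + cross p s * ‖q‖ ^ 2 := by
    have := congrArg (inner ℝ w) (cross_smul_eq_add p q s)
    simp only [inner_add_right, real_inner_smul_right] at this
    linear_combination 2 * this + cross s q * hp + cross p s * hq
  have hss : ‖s‖ ^ 2 * ‖m‖ ^ 2 = ‖p‖ ^ 2 * ‖q‖ ^ 2 := by
    rw [← mul_pow, ← norm_mul, hsm, norm_mul, mul_pow]
  have hsides : inner ℝ p (p - q) + inner ℝ q (q - p) = ‖p - q‖ ^ 2 := by
    rw [norm_sub_sq_real, inner_sub_right, inner_sub_right, real_inner_self_eq_norm_sq,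
      real_inner_self_eq_norm_sq, real_inner_comm q p]
    ring
  rw [norm_sub_sq_real]
  linear_combination cross p q * hss - ‖m‖ ^ 2 * hcirc - ‖p‖ ^ 2 / 2 * hβ - ‖q‖ ^ 2 / 2 * hγ
    + ω.im * ‖p‖ ^ 2 * ‖q‖ ^ 2 * hsides

theorem im_mul_cross_neg {p q s w ω : ℂ} (hD : cross p q ≠ 0) (hω : ω ^ 2 + ω + 1 = 0)
    (hsm : s * (q - ω * (p - q)) = p * q)
    (hwp : ‖w - p‖ = ‖w‖) (hwq : ‖w - q‖ = ‖w‖) (hws : ‖w - s‖ < ‖w‖) :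
    ω.im * cross p q < 0 := by
  obtain ⟨hre, him⟩ := re_and_im_sq_of_sq_add_add_one_eq_zero hω
  have hpow := power_mul_cross_mul_norm_sq_eq hre hsm hwp hwq
  set m := q - ω * (p - q)
  have hpq : 0 < ‖p‖ ^ 2 * ‖q‖ ^ 2 := by
    rw [← inner_sq_add_cross_sq]; have := pow_two_pos_of_ne_zero hD; positivity
  have hm : 0 < ‖m‖ ^ 2 := by
    have hss : ‖s‖ ^ 2 * ‖m‖ ^ 2 = ‖p‖ ^ 2 * ‖q‖ ^ 2 := by
      rw [← mul_pow, ← norm_mul, hsm, norm_mul, mul_pow]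
    exact pos_of_mul_pos_right (hss ▸ hpq) (by positivity)
  have hp_sub_q : 0 < ‖p - q‖ := norm_pos_iff.2 (sub_ne_zero.2 (ne_of_cross_ne_zero hD))
  have hk : ω.im ≠ 0 := by rintro h0; rw [h0] at him; norm_num at him
  have hpower : ‖w - s‖ ^ 2 - ‖w‖ ^ 2 < 0 :=
    sub_neg.2 (pow_lt_pow_left₀ hws (norm_nonneg _) two_ne_zero)
  have key : 0 < ((‖w - s‖ ^ 2 - ‖w‖ ^ 2) * ‖m‖ ^ 2) * (ω.im * cross p q) := by
    calc 0 < ω.im ^ 2 * (‖p‖ ^ 2 * ‖q‖ ^ 2 * ‖p - q‖ ^ 2) := by positivity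
      _ = _ := by rw [sq ω.im, mul_assoc, ← hpow]; ring
  exact neg_of_mul_pos_right key (mul_nonpos_of_nonpos_of_nonneg hpower.le hm.le)

theorem cross_mul_cross_pos {p q s w : ℂ} (hD : cross p q ≠ 0)
    (h₁ : ‖s - p‖ * ‖q‖ = ‖s - q‖ * ‖p‖) (h₂ : ‖s‖ * ‖p - q‖ = ‖s - q‖ * ‖p‖)
    (hwp : ‖w - p‖ = ‖w‖) (hwq : ‖w - q‖ = ‖w‖) (hws : ‖w - s‖ < ‖w‖)
    (hB : -(‖p‖ * ‖p - q‖) < 2 * inner ℝ p (p - q)) : 0 < cross s q * cross p q := by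
  have hs : s ≠ 0 := by
    rintro rfl
    have : q = 0 ∨ p = 0 := by simpa using h₂.symm
    rcases this with rfl | rfl <;> simp [cross] at hD
  obtain ⟨ω, hω, hsm⟩ := exists_cube_root_of_isodynamic hs (ne_of_cross_ne_zero hD) h₁ h₂
  obtain ⟨hre, him⟩ := re_and_im_sq_of_sq_add_add_one_eq_zero hω
  have hangle : 0 < cross p q * (cross p q - 2 * ω.im * inner ℝ p (p - q)) := by
    refine mul_sub_two_mul_mul_pos him (im_mul_cross_neg hD hω hsm hwp hwq hws) ?_ hB
    rw [mul_pow, ← inner_sq_add_cross_sq]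
    simp only [cross, Complex.mul_im, Complex.sub_re, Complex.sub_im, Complex.conj_re,
      Complex.conj_im]
    ring
  have hq : 0 < ‖q‖ ^ 2 := by
    have : q ≠ 0 := by rintro rfl; simp [cross] at hD
    positivity
  have key := (two_mul_cross_mul_norm_sq_eq hre hsm).1
  refine pos_of_mul_pos_left (b := 2 * ‖q - ω * (p - q)‖ ^ 2) ?_ (by positivity)
  calc 0 < ‖q‖ ^ 2 * (cross p q * (cross p q - 2 * ω.im * inner ℝ p (p - q))) := by positivity
    _ = _ := by rw [mul_left_comm, ← key]; ring

def orientedArea (a b c : ℂ) : ℝ := cross (b - a) (c - a)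

theorem orientedArea_swap_left (a b c : ℂ) : orientedArea b a c = -orientedArea a b c := by
  simp only [orientedArea, cross, Complex.mul_im, Complex.sub_re, Complex.sub_im,
    Complex.conj_re, Complex.conj_im]
  ring

theorem orientedArea_swap_right (a b c : ℂ) : orientedArea a c b = -orientedArea a b c := by
  simp only [orientedArea, cross, Complex.mul_im, Complex.sub_re, Complex.sub_im,
    Complex.conj_re, Complex.conj_im]
  ring

theorem orientedArea_of_eq_add_smul {a b c z : ℂ} {u v w : ℝ} (h : u + v + w = 1)
    (hz : z = u • a + v • b + w • c) :
    orientedArea z b c = u * orientedArea a b c ∧ orientedArea a z c = v * orientedArea a b c ∧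
      orientedArea a b z = w * orientedArea a b c := by
  obtain rfl : u = 1 - v - w := by linarith
  subst hz
  simp only [orientedArea, cross, Complex.mul_im, Complex.sub_re, Complex.sub_im,
    Complex.conj_re, Complex.conj_im, Complex.add_re, Complex.add_im, Complex.real_smul,
    Complex.ofReal_re, Complex.ofReal_im, Complex.mul_re, zero_mul, sub_zero, add_zero]
  refine ⟨?_, ?_, ?_⟩ <;> ring

def triangleBasis {a b c : ℂ} (h : AffineIndependent ℝ ![a, b, c]) : AffineBasis (Fin 3) ℝ ℂ :=
  ⟨![a, b, c], h, by
    rw [h.affineSpan_eq_top_iff_card_eq_finrank_add_one, Complex.finrank_real_complex]; rfl⟩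

@[simp]
theorem coe_triangleBasis {a b c : ℂ} (h : AffineIndependent ℝ ![a, b, c]) :
    ⇑(triangleBasis h) = ![a, b, c] :=
  rfl

theorem orientedArea_eq_coord_mul {a b c : ℂ} (h : AffineIndependent ℝ ![a, b, c]) (z : ℂ) :
    orientedArea z b c = (triangleBasis h).coord 0 z * orientedArea a b c ∧
      orientedArea a z c = (triangleBasis h).coord 1 z * orientedArea a b c ∧
      orientedArea a b z = (triangleBasis h).coord 2 z * orientedArea a b c := by
  apply orientedArea_of_eq_add_smul
  · simpa only [Fin.sum_univ_three] using (triangleBasis h).sum_coord_apply_eq_one z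
  · simpa [Fin.sum_univ_three] using ((triangleBasis h).linear_combination_coord_eq_self z).symm

theorem orientedArea_ne_zero {a b c : ℂ} (h : AffineIndependent ℝ ![a, b, c]) :
    orientedArea a b c ≠ 0 := by
  intro hD
  have hca : c ≠ a := fun hca =>
    h.injective.ne (show (2 : Fin 3) ≠ 0 by decide) (by simpa using hca)
  have h₀ := (orientedArea_eq_coord_mul h (a + Complex.I * (c - a))).2.1
  rw [hD, mul_zero] at h₀
  apply hca
  rw [← sub_eq_zero, ← Complex.normSq_eq_zero, Complex.normSq_apply]
  simp only [orientedArea, cross, Complex.mul_im, Complex.mul_re, Complex.sub_re, Complex.sub_im,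
    Complex.add_re, Complex.add_im, Complex.conj_re, Complex.conj_im, Complex.I_re,
    Complex.I_im] at h₀ ⊢
  linear_combination -h₀

theorem mem_interior_convexHull_of_orientedArea_pos {a b c s : ℂ}
    (h : AffineIndependent ℝ ![a, b, c]) (ha : 0 < orientedArea s b c * orientedArea a b c)
    (hb : 0 < orientedArea a s c * orientedArea a b c)
    (hc : 0 < orientedArea a b s * orientedArea a b c) :
    s ∈ interior (convexHull ℝ {a, b, c}) := by
  have hrange : ({a, b, c} : Set ℂ) = Set.range (triangleBasis h) := by
    rw [coe_triangleBasis, Matrix.range_cons, Matrix.range_cons_cons_empty, Set.singleton_union]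
  rw [hrange, AffineBasis.interior_convexHull]
  obtain ⟨hsa, hsb, hsc⟩ := orientedArea_eq_coord_mul h s
  intro i
  fin_cases i
  · rw [hsa, mul_assoc] at ha; exact pos_of_mul_pos_left ha (mul_self_nonneg _)
  · rw [hsb, mul_assoc] at hb; exact pos_of_mul_pos_left hb (mul_self_nonneg _)
  · rw [hsc, mul_assoc] at hc; exact pos_of_mul_pos_left hc (mul_self_nonneg _)

theorem orientedArea_mul_pos_of_isodynamic {a b c s o : ℂ} {r : ℝ}
    (hD : orientedArea a b c ≠ 0)
    (hb : dist s b * dist a c = dist s c * dist a b)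
    (ha : dist s a * dist b c = dist s c * dist a b)
    (hoa : dist o a = r) (hob : dist o b = r) (hoc : dist o c = r) (hos : dist o s < r)
    (hB : ∠ a b c < 2 * π / 3) : 0 < orientedArea a s c * orientedArea a b c := by
  have hp : b - a ≠ 0 := by rintro h; simp [orientedArea, h, cross] at hD
  have hpq : b - a - (c - a) ≠ 0 := sub_ne_zero.2 (ne_of_cross_ne_zero hD)
  have hangle : ∠ a b c = InnerProductGeometry.angle (b - a) (b - a - (c - a)) := by
    rw [EuclideanGeometry.angle, ← InnerProductGeometry.angle_neg_neg]
    congr 1 <;> simp only [vsub_eq_sub] <;> abel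
  refine cross_mul_cross_pos (w := o - a) hD ?_ ?_ ?_ ?_ ?_
    (neg_mul_lt_two_inner_of_angle_lt hp hpq (hangle ▸ hB))
  · simpa only [sub_sub_sub_cancel_right, ← dist_eq_norm, dist_comm] using hb
  · simpa only [sub_sub_sub_cancel_right, ← dist_eq_norm, dist_comm] using ha
  · simp only [sub_sub_sub_cancel_right, ← dist_eq_norm, hob, hoa]
  · simp only [sub_sub_sub_cancel_right, ← dist_eq_norm, hoc, hoa]
  · simpa only [sub_sub_sub_cancel_right, ← dist_eq_norm, hoa] using hos

theorem mem_interior_convexHull_of_isodynamic {a b c s o : ℂ} {r : ℝ}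
    (hind : AffineIndependent ℝ ![a, b, c])
    (ha : ∠ b a c < 2 * π / 3) (hb : ∠ a b c < 2 * π / 3) (hc : ∠ b c a < 2 * π / 3)
    (h₁ : dist s b * dist a c = dist s c * dist a b)
    (h₂ : dist s a * dist b c = dist s c * dist b a)
    (h₃ : dist s a * dist c b = dist s b * dist c a)
    (hoa : dist o a = r) (hob : dist o b = r) (hoc : dist o c = r) (hos : dist o s < r) :
    s ∈ interior (convexHull ℝ {a, b, c}) := by
  have hD := orientedArea_ne_zero hind
  apply mem_interior_convexHull_of_orientedArea_pos hind
  · have := orientedArea_mul_pos_of_isodynamic (by rwa [orientedArea_swap_left, neg_ne_zero]) h₂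
      (by rw [dist_comm b a]; exact h₁) hob hoa hoc hos ha
    rwa [orientedArea_swap_left s b c, orientedArea_swap_left a b c, neg_mul_neg] at this
  · exact orientedArea_mul_pos_of_isodynamic hD h₁ (by rwa [dist_comm b a] at h₂)
      hoa hob hoc hos hb
  · have := orientedArea_mul_pos_of_isodynamic (by rwa [orientedArea_swap_right, neg_ne_zero])
      h₁.symm (by rwa [dist_comm c a] at h₃) hoa hoc hob hos (by rwa [angle_comm] at hc)
    rwa [orientedArea_swap_right a b s, orientedArea_swap_right a b c, neg_mul_neg] at this

theorem stmt1 (A B C S : Pt)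
    (hABC : AffineIndependent ℝ ![A, B, C])
    (hA : ∠ B A C < 2 * π / 3) (hB : ∠ A B C < 2 * π / 3) (hC : ∠ B C A < 2 * π / 3)
    (hS : IsFirstIsodynamic A B C S) :
    S ∈ interior (convexHull ℝ ({A, B, C} : Set Pt)) := by
  obtain ⟨h₁, h₂, h₃, O, r, hOA, hOB, hOC, hOS⟩ := hS
  let e : Pt ≃ₗᵢ[ℝ] ℂ := Complex.orthonormalBasisOneI.repr.symm
  have hangle : ∀ X Y Z : Pt, ∠ (e X) (e Y) (e Z) = ∠ X Y Z :=
    e.toLinearIsometry.toAffineIsometry.angle_map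
  have hind : AffineIndependent ℝ ![e A, e B, e C] := by
    have hcomp : ![e A, e B, e C] = e ∘ ![A, B, C] := by ext i; fin_cases i <;> rfl
    rw [hcomp]
    exact e.toLinearEquiv.toAffineEquiv.affineIndependent_iff.2 hABC
  rw [← e.injective.mem_set_image, e.image_interior_convexHull, Set.image_insert_eq,
    Set.image_insert_eq, Set.image_singleton]
  exact mem_interior_convexHull_of_isodynamic (o := e O) (r := r) hind (by rwa [hangle])
    (by rwa [hangle]) (by rwa [hangle]) (by simpa only [e.dist_map] using h₁)
    (by simpa only [e.dist_map] using h₂) (by simpa only [e.dist_map] using h₃)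
    (by rwa [e.dist_map]) (by rwa [e.dist_map]) (by rwa [e.dist_map]) (by rwa [e.dist_map])
end
end

section
/- The distance from vertex A to the first isodynamic point S of triangle ABC equals bc√2 / √(a² + b² + c² + 4K√3), where a,b,c are the side lengths and K is the area of the triangle. -/
open EuclideanGeometry Real

noncomputable section

set_option maxHeartbeats 2000000 in
set_option maxRecDepth 8000 in
theorem stmt3 (A B C S : Pt) (a b c K : ℝ)
    (hABC : AffineIndependent ℝ ![A, B, C])
    (hS : IsFirstIsodynamic A B C S)
    (ha : a = dist B C) (hb : b = dist C A) (hc : c = dist A B)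
    (hK : K = b * c * Real.sin (∠ B A C) / 2) :
    dist A S = b * c * Real.sqrt 2 / Real.sqrt (a ^ 2 + b ^ 2 + c ^ 2 + 4 * K * Real.sqrt 3) := by
  obtain ⟨h1, h2, -, O, r, hOA, hOB, hOC, hOS⟩ := hS
  -- nondegeneracy
  have hnc : ¬Collinear ℝ ({A, B, C} : Set Pt) :=
    affineIndependent_iff_not_collinear_set.mp hABC
  have hnc' : ¬Collinear ℝ ({B, A, C} : Set Pt) := by
    rwa [Set.insert_comm]
  have hBC : B ≠ C := by
    intro h
    exact (by decide : (1 : Fin 3) ≠ 2) (hABC.injective (by simpa using h))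
  have hCA : C ≠ A := by
    intro h
    exact (by decide : (2 : Fin 3) ≠ 0) (hABC.injective (by simpa using h))
  have hAB : A ≠ B := by
    intro h
    exact (by decide : (0 : Fin 3) ≠ 1) (hABC.injective (by simpa using h))
  have ha' : 0 < a := ha ▸ dist_pos.mpr hBC
  have hb' : 0 < b := hb ▸ dist_pos.mpr hCA
  have hc' : 0 < c := hc ▸ dist_pos.mpr hAB
  have hsin : 0 < Real.sin (∠ B A C) := EuclideanGeometry.sin_pos_of_not_collinear hnc'
  have hK0 : 0 < K := by
    rw [hK]; positivity
  -- law of cosines and Heron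
  have hcos : 2 * b * c * Real.cos (∠ B A C) = b ^ 2 + c ^ 2 - a ^ 2 := by
    have hlc := EuclideanGeometry.law_cos B A C
    rw [ha, hb, hc, dist_comm A B]
    linear_combination hlc
  have hK2 : 16 * K ^ 2 =
      2 * a ^ 2 * b ^ 2 + 2 * b ^ 2 * c ^ 2 + 2 * c ^ 2 * a ^ 2 - a ^ 4 - b ^ 4 - c ^ 4 := by
    have h16 : 16 * K ^ 2 = 4 * b ^ 2 * c ^ 2 * Real.sin (∠ B A C) ^ 2 := by rw [hK]; ring
    rw [Real.sin_sq] at h16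
    linear_combination h16 - (2 * b * c * Real.cos (∠ B A C) + (b ^ 2 + c ^ 2 - a ^ 2)) * hcos
  -- distances from S
  set x := dist A S with hx
  set y := dist B S with hy
  set z := dist C S with hz
  have h1' : y * b = z * c := by
    rw [hy, hz, hb, hc, dist_comm B S, dist_comm C S, dist_comm C A]; exact h1
  have h2' : x * a = z * c := by
    rw [hx, hz, ha, hc, dist_comm A S, dist_comm C S, dist_comm A B]
    exact h2
  have h12 : y * b = x * a := h1'.trans h2'.symm
  have hyx : b ^ 2 * y ^ 2 = a ^ 2 * x ^ 2 := by
    linear_combination (y * b + x * a) * h12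
  have hzx : c ^ 2 * z ^ 2 = a ^ 2 * x ^ 2 := by
    linear_combination -(z * c + x * a) * h2'
  -- coordinates
  have hd2 : ∀ P Q : Pt, dist P Q ^ 2 = (P 0 - Q 0) ^ 2 + (P 1 - Q 1) ^ 2 := by
    intro P Q
    rw [EuclideanSpace.dist_eq, Real.sq_sqrt (by positivity)]
    simp [Fin.sum_univ_two, Real.dist_eq, sq_abs]
  -- Cayley–Menger relation
  have hCM : x ^ 2 * (4 * b ^ 2 * c ^ 2 - (b ^ 2 + c ^ 2 - a ^ 2) ^ 2)
      - b ^ 2 * (c ^ 2 + x ^ 2 - y ^ 2) ^ 2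
      + (c ^ 2 + x ^ 2 - y ^ 2) * (b ^ 2 + x ^ 2 - z ^ 2) * (b ^ 2 + c ^ 2 - a ^ 2)
      - c ^ 2 * (b ^ 2 + x ^ 2 - z ^ 2) ^ 2 = 0 := by
    rw [hx, hy, hz, ha, hb, hc,
      hd2 A S, hd2 B S, hd2 C S, hd2 B C, hd2 C A, hd2 A B]
    ring
  -- circumcenter relations
  have e1 : (O 0 - A 0) ^ 2 + (O 1 - A 1) ^ 2 = (O 0 - B 0) ^ 2 + (O 1 - B 1) ^ 2 := by
    rw [← hd2, ← hd2, hOA, hOB]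
  have e2 : (O 0 - A 0) ^ 2 + (O 1 - A 1) ^ 2 = (O 0 - C 0) ^ 2 + (O 1 - C 1) ^ 2 := by
    rw [← hd2, ← hd2, hOA, hOC]
  -- power of S with respect to the circumcircle
  have hPow0 : (2 * a ^ 2 * b ^ 2 + 2 * b ^ 2 * c ^ 2 + 2 * c ^ 2 * a ^ 2 - a ^ 4 - b ^ 4 - c ^ 4)
        * (dist O S ^ 2 - dist O A ^ 2)
      = (2 * a ^ 2 * b ^ 2 + 2 * b ^ 2 * c ^ 2 + 2 * c ^ 2 * a ^ 2 - a ^ 4 - b ^ 4 - c ^ 4) * x ^ 2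
        - b ^ 2 * (a ^ 2 + c ^ 2 - b ^ 2) * (c ^ 2 + x ^ 2 - y ^ 2)
        - c ^ 2 * (a ^ 2 + b ^ 2 - c ^ 2) * (b ^ 2 + x ^ 2 - z ^ 2) := by
    have hd4 : ∀ P Q : Pt, dist P Q ^ 4 = (dist P Q ^ 2) ^ 2 := fun P Q => by ring
    rw [hx, hy, hz, ha, hb, hc, hd4 B C, hd4 C A, hd4 A B, hd2 O S, hd2 O A,
      hd2 A S, hd2 B S, hd2 C S, hd2 B C, hd2 C A, hd2 A B]
    linear_combination (4*(B 1)*(C 0)*(C 1)*(S 0) - 4*(B 1)*(C 0)^2*(S 1) - 4*(B 0)*(C 1)^2*(S 0) + 4*(B 0)*(C 0)*(C 1)*(S 1) - 4*(A 1)*(C 0)*(C 1)*(S 0) + 4*(A 1)*(C 0)^2*(S 1) - 4*(A 1)*(B 1)*(C 0)*(S 0) + 4*(A 1)*(B 1)*(C 0)^2 + 8*(A 1)*(B 0)*(C 1)*(S 0) - 4*(A 1)*(B 0)*(C 0)*(S 1) - 4*(A 1)*(B 0)*(C 0)*(C 1) + 4*(A 1)^2*(C 0)*(S 0) - 4*(A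 1)^2*(C 0)^2 - 4*(A 1)^2*(B 0)*(S 0) + 4*(A 1)^2*(B 0)*(C 0) + 4*(A 0)*(C 1)^2*(S 0) - 4*(A 0)*(C 0)*(C 1)*(S 1) - 4*(A 0)*(B 1)*(C 1)*(S 0) + 8*(A 0)*(B 1)*(C 0)*(S 1) - 4*(A 0)*(B 1)*(C 0)*(C 1) - 4*(A 0)*(B 0)*(C 1)*(S 1) + 4*(A 0)*(B 0)*(C 1)^2 - 4*(A 0)*(A 1)*(C 1)*(S 0) - 4*(A 0)*(A 1)*(C 0)*(S 1) + 8*(A 0)*(A 1)*(C 0)*(C 1) + 4*(A 0)*(A 1)*(B 1)*(S 0) - 4*(A 0)*(A 1)*(B 1)*(C 0) + 4*(A 0)*(A 1)*(B 0)*(S 1) - 4*(A 0)*(A 1)*(B 0)*(C 1) + 4*(A 0)^2*(C 1)*(S 1) - 4*(A 0)^2*(C 1)^2 - 4*(A 0)^2*(B 1)*(S 1) + 4*(A 0)^2*(B 1)*(C 1)) * e1 + (-4*(B 1)^2*(C 0)*(S 0) + 4*(B 0)*(B 1)*(C 1)*(S 0) + 4*(B 0)*(B 1)*(C 0)*(S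 1) - 4*(B 0)^2*(C 1)*(S 1) + 8*(A 1)*(B 1)*(C 0)*(S 0) - 4*(A 1)*(B 0)*(C 1)*(S 0) - 4*(A 1)*(B 0)*(C 0)*(S 1) - 4*(A 1)*(B 0)*(B 1)*(S 0) - 4*(A 1)*(B 0)*(B 1)*(C 0) + 4*(A 1)*(B 0)^2*(S 1) + 4*(A 1)*(B 0)^2*(C 1) - 4*(A 1)^2*(C 0)*(S 0) + 4*(A 1)^2*(B 0)*(S 0) + 4*(A 1)^2*(B 0)*(C 0) - 4*(A 1)^2*(B 0)^2 - 4*(A 0)*(B 1)*(C 1)*(S 0) - 4*(A 0)*(B 1)*(C 0)*(S 1) + 4*(A 0)*(B 1)^2*(S 0) + 4*(A 0)*(B 1)^2*(C 0) + 8*(A 0)*(B 0)*(C 1)*(S 1) - 4*(A 0)*(B 0)*(B 1)*(S 1) - 4*(A 0)*(B 0)*(B 1)*(C 1) + 4*(A 0)*(A 1)*(C 1)*(S 0) + 4*(A 0)*(A 1)*(C 0)*(S 1) - 4*(A 0)*(A 1)*(B 1)*(S 0) - 4*(A 0)*(A 1)*(B 1)*(C 0) - 4*(A 0)*(A 1)*(B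 0)*(S 1) - 4*(A 0)*(A 1)*(B 0)*(C 1) + 8*(A 0)*(A 1)*(B 0)*(B 1) - 4*(A 0)^2*(C 1)*(S 1) + 4*(A 0)^2*(B 1)*(S 1) + 4*(A 0)^2*(B 1)*(C 1) - 4*(A 0)^2*(B 1)^2) * e2
  have hPow1 : (2 * a ^ 2 * b ^ 2 + 2 * b ^ 2 * c ^ 2 + 2 * c ^ 2 * a ^ 2 - a ^ 4 - b ^ 4 - c ^ 4)
        * (dist O S ^ 2 - dist O A ^ 2)
      = (a ^ 2 + b ^ 2 + c ^ 2) * (a ^ 2 * x ^ 2) - 2 * a ^ 2 * b ^ 2 * c ^ 2 := by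
    linear_combination hPow0 + (a ^ 2 + c ^ 2 - b ^ 2) * hyx + (a ^ 2 + b ^ 2 - c ^ 2) * hzx
  have hher : 0 < 2 * a ^ 2 * b ^ 2 + 2 * b ^ 2 * c ^ 2 + 2 * c ^ 2 * a ^ 2 - a ^ 4 - b ^ 4 - c ^ 4 := by
    rw [← hK2]; positivity
  have hOSlt : dist O S ^ 2 - dist O A ^ 2 < 0 := by
    have h0 : dist O S ^ 2 < r ^ 2 :=
      pow_lt_pow_left₀ hOS dist_nonneg (by norm_num)
    rw [hOA]; linarith only [h0]
  have hPneg : (a ^ 2 + b ^ 2 + c ^ 2) * (a ^ 2 * x ^ 2) - 2 * a ^ 2 * b ^ 2 * c ^ 2 < 0 := by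
    rw [← hPow1]
    exact mul_neg_of_pos_of_neg hher hOSlt
  -- the main quadratic identity
  have hMainBig : b ^ 4 * c ^ 4 *
      (((a ^ 2 + b ^ 2 + c ^ 2) * (a ^ 2 * x ^ 2) - 2 * a ^ 2 * b ^ 2 * c ^ 2) ^ 2
        - 48 * K ^ 2 * (a ^ 2 * x ^ 2) ^ 2) = 0 := by
    linear_combination (-(4 * a ^ 2 * b ^ 6 * c ^ 6)) * hCM + (4*a^2*b^4*c^8*z^2 - 4*a^2*b^4*c^8*x^2 + 4*a^2*b^6*c^6*z^2 - 4*a^2*b^6*c^6*y^2 + 4*a^2*b^6*c^6*x^2 + 4*a^2*b^6*c^8 - 4*a^2*b^8*c^6 - 4*a^4*b^4*c^6*z^2 + 4*a^4*b^6*c^6) * hyx + (-4*a^2*b^6*c^6*z^2 + 4*a^2*b^6*c^6*x^2 - 4*a^2*b^6*c^8 - 4*a^2*b^8*c^4*x^2 + 4*a^2*b^8*c^6 + 4*a^4*b^4*c^6*x^2 + 4*a^4*b^6*c^4*x^2 + 4*a^4*b^6*c^6 - 4*a^6*b^4*c^4*x^2) * hzx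
      + (-(3 * a ^ 4 * x ^ 4 * b ^ 4 * c ^ 4)) * hK2
  have hMain : ((a ^ 2 + b ^ 2 + c ^ 2) * (a ^ 2 * x ^ 2) - 2 * a ^ 2 * b ^ 2 * c ^ 2) ^ 2
      = 48 * K ^ 2 * (a ^ 2 * x ^ 2) ^ 2 := by
    have hbc : b ^ 4 * c ^ 4 ≠ 0 := by positivity
    have := mul_eq_zero.mp hMainBig
    rcases this with h | h
    · exact absurd h hbc
    · linarith only [h]
  -- solve for x^2
  have h3 : Real.sqrt 3 ^ 2 = 3 := Real.sq_sqrt (by norm_num)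
  have hphi : 0 ≤ 4 * K * Real.sqrt 3 * (a ^ 2 * x ^ 2) := by positivity
  have hW : 2 * a ^ 2 * b ^ 2 * c ^ 2 - (a ^ 2 + b ^ 2 + c ^ 2) * (a ^ 2 * x ^ 2)
      = 4 * K * Real.sqrt 3 * (a ^ 2 * x ^ 2) := by
    have hfac : (2 * a ^ 2 * b ^ 2 * c ^ 2 - (a ^ 2 + b ^ 2 + c ^ 2) * (a ^ 2 * x ^ 2)
          - 4 * K * Real.sqrt 3 * (a ^ 2 * x ^ 2))
        * (2 * a ^ 2 * b ^ 2 * c ^ 2 - (a ^ 2 + b ^ 2 + c ^ 2) * (a ^ 2 * x ^ 2)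
          + 4 * K * Real.sqrt 3 * (a ^ 2 * x ^ 2)) = 0 := by
      linear_combination hMain - 16 * K ^ 2 * (a ^ 2 * x ^ 2) ^ 2 * h3
    rcases mul_eq_zero.mp hfac with h | h
    · linarith only [h]
    · linarith only [h, hphi, hPneg]
  have hQp : 0 < a ^ 2 + b ^ 2 + c ^ 2 + 4 * K * Real.sqrt 3 := by
    have h4 : 0 < 4 * K * Real.sqrt 3 := by positivity
    have h5 : (0:ℝ) ≤ a ^ 2 + b ^ 2 + c ^ 2 := by positivity
    linarith only [h4, h5]
  have hx2 : x ^ 2 = 2 * b ^ 2 * c ^ 2 / (a ^ 2 + b ^ 2 + c ^ 2 + 4 * K * Real.sqrt 3) := by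
    rw [eq_div_iff hQp.ne']
    have ha2 : (a ^ 2 : ℝ) ≠ 0 := by positivity
    apply mul_left_cancel₀ ha2
    linear_combination -hW
  -- finish
  have hxnn : 0 ≤ x := hx ▸ dist_nonneg
  calc x = Real.sqrt (x ^ 2) := (Real.sqrt_sq hxnn).symm
    _ = Real.sqrt (2 * b ^ 2 * c ^ 2 / (a ^ 2 + b ^ 2 + c ^ 2 + 4 * K * Real.sqrt 3)) := by
        rw [hx2]
    _ = Real.sqrt (2 * b ^ 2 * c ^ 2) / Real.sqrt (a ^ 2 + b ^ 2 + c ^ 2 + 4 * K * Real.sqrt 3) := by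
        rw [Real.sqrt_div (by positivity)]
    _ = b * c * Real.sqrt 2 / Real.sqrt (a ^ 2 + b ^ 2 + c ^ 2 + 4 * K * Real.sqrt 3) := by
        rw [show (2 * b ^ 2 * c ^ 2 : ℝ) = (b * c * Real.sqrt 2) ^ 2 by
          rw [mul_pow, mul_pow, Real.sq_sqrt (by norm_num : (0:ℝ) ≤ 2)]; ring,
          Real.sqrt_sq (by positivity)]
end
end

section
/- If S is the first isodynamic point of triangle ABC (interior, all angles < 120°), then ∠ASB = ∠ACB + 60°. -/
/-!
Translate `C` to the origin: `p = A - C`, `q = B - C`, `s = S - C`, and let `Δ` be the in-circle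
determinant of `0, p, q, s`. Polynomial identities modulo the two Apollonius conditions give
`2⟪s - p, s - q⟫|p|²|q|² - |s|²|p - q|²⟪p, q⟫ = 2Δ (p × q)` and `4Δ² = 3 (|s|²|p - q|²)²`;
combined with the law of cosines and `|p||q| sin C = |p × q|` this says
`cos ∠ASB = cos (C ± π/3)`. The sign is that of `Δ (p × q) = pow(S) (p × q)²`, negative because
`S` lies inside the circumcircle, so `cos ∠ASB = cos (C + π/3)`, and `C + π/3 < π` lets us drop `cos`.
-/

open EuclideanGeometry Real

noncomputable section

theorem eq_neg_sqrt_mul_of_sq_eq {x y c : ℝ} (hx : x ≤ 0) (hy : 0 ≤ y) (hc : 0 ≤ c)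
    (h : x ^ 2 = c * y ^ 2) : x = -(√c * y) :=
  calc x = -√(x ^ 2) := by rw [sqrt_sq_eq_abs, abs_of_nonpos hx, neg_neg]
    _ = -(√c * y) := by rw [h, sqrt_mul hc, sqrt_sq hy]

namespace Pt

open InnerProductGeometry

theorem norm_sq_eq (v : Pt) : ‖v‖ ^ 2 = v 0 ^ 2 + v 1 ^ 2 := by
  simp [EuclideanSpace.real_norm_sq_eq, Fin.sum_univ_two]

theorem inner_eq (u v : Pt) : inner ℝ u v = u 0 * v 0 + u 1 * v 1 := by
  simp [PiLp.inner_apply, Fin.sum_univ_two, mul_comm]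

def cross (u v : Pt) : ℝ := u 0 * v 1 - u 1 * v 0

theorem sin_angle_mul_norm_mul_norm (u v : Pt) :
    sin (InnerProductGeometry.angle u v) * (‖u‖ * ‖v‖) = |u.cross v| := by
  rw [InnerProductGeometry.sin_angle_mul_norm_mul_norm, ← sqrt_sq_eq_abs]
  congr 1
  simp only [real_inner_self_eq_norm_sq, norm_sq_eq, inner_eq, cross]
  ring

def inCircleDet (p q s : Pt) : ℝ :=
  ‖p‖ ^ 2 * q.cross s + ‖q‖ ^ 2 * s.cross p + ‖s‖ ^ 2 * p.cross q

theorem power_mul_cross_eq_inCircleDet {p q s o : Pt} {r : ℝ}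
    (hp : ‖o - p‖ = r) (hq : ‖o - q‖ = r) (h0 : ‖o‖ = r) :
    (‖s - o‖ ^ 2 - r ^ 2) * p.cross q = inCircleDet p q s := by
  have hp2 : ‖o - p‖ ^ 2 = r ^ 2 := by rw [hp]
  have hq2 : ‖o - q‖ ^ 2 = r ^ 2 := by rw [hq]
  have h02 : ‖o‖ ^ 2 = r ^ 2 := by rw [h0]
  linear_combination (norm := skip) -q.cross s * hp2 + p.cross s * hq2
    - (q.cross p - q.cross s + p.cross s) * h02
  simp only [inCircleDet, cross, norm_sq_eq, PiLp.sub_apply]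
  ring

theorem apollonius_inner_eq {p q s : Pt}
    (hp : ‖s - p‖ ^ 2 * ‖q‖ ^ 2 = ‖s‖ ^ 2 * ‖p - q‖ ^ 2)
    (hq : ‖s - q‖ ^ 2 * ‖p‖ ^ 2 = ‖s‖ ^ 2 * ‖p - q‖ ^ 2) :
    2 * inner ℝ (s - p) (s - q) * (‖p‖ ^ 2 * ‖q‖ ^ 2) - ‖s‖ ^ 2 * ‖p - q‖ ^ 2 * inner ℝ p q
      = 2 * inCircleDet p q s * p.cross q := by
  linear_combination (norm := skip) inner ℝ p q * hp + inner ℝ p q * hq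
  simp only [inCircleDet, cross, norm_sq_eq, inner_eq, PiLp.sub_apply]
  ring

theorem apollonius_inCircleDet_sq {p q s : Pt}
    (hp : ‖s - p‖ ^ 2 * ‖q‖ ^ 2 = ‖s‖ ^ 2 * ‖p - q‖ ^ 2)
    (hq : ‖s - q‖ ^ 2 * ‖p‖ ^ 2 = ‖s‖ ^ 2 * ‖p - q‖ ^ 2) :
    4 * inCircleDet p q s ^ 2 = 3 * (‖s‖ ^ 2 * ‖p - q‖ ^ 2) ^ 2 := by
  linear_combination (norm := skip)
    ((‖q‖ ^ 2 + 3 * ‖p‖ ^ 2 - 4 * inner ℝ p q) * ‖s‖ ^ 2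
      + 2 * (‖q‖ ^ 2 * inner ℝ p s - ‖p‖ ^ 2 * inner ℝ q s)) * hp
    + ((3 * ‖q‖ ^ 2 + ‖p‖ ^ 2 - 4 * inner ℝ p q) * ‖s‖ ^ 2
      - 2 * (‖q‖ ^ 2 * inner ℝ p s - ‖p‖ ^ 2 * inner ℝ q s)) * hq
  simp only [inCircleDet, cross, norm_sq_eq, inner_eq, PiLp.sub_apply]
  ring

theorem cos_angle_sub_sub_eq_cos_add_pi_div_three {p q s o : Pt} {r : ℝ}
    (hp0 : p ≠ 0) (hq0 : q ≠ 0) (hpq : p ≠ q)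
    (hsp : ‖s - p‖ * ‖q‖ = ‖s‖ * ‖p - q‖) (hsq : ‖s - q‖ * ‖p‖ = ‖s‖ * ‖p - q‖)
    (hop : ‖o - p‖ = r) (hoq : ‖o - q‖ = r) (ho : ‖o‖ = r) (hos : ‖o - s‖ < r) :
    cos (InnerProductGeometry.angle (p - s) (q - s))
      = cos (InnerProductGeometry.angle p q + π / 3) := by
  have hsp2 : ‖s - p‖ ^ 2 * ‖q‖ ^ 2 = ‖s‖ ^ 2 * ‖p - q‖ ^ 2 := by
    rw [← mul_pow, hsp, mul_pow]
  have hsq2 : ‖s - q‖ ^ 2 * ‖p‖ ^ 2 = ‖s‖ ^ 2 * ‖p - q‖ ^ 2 := by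
    rw [← mul_pow, hsq, mul_pow]
  have hpow : ‖s - o‖ ^ 2 - r ^ 2 < 0 := by
    rw [norm_sub_rev]; nlinarith [norm_nonneg (o - s)]
  set K := ‖s‖ ^ 2 * ‖p - q‖ ^ 2
  have hkey : 2 * inner ℝ (s - p) (s - q) * (‖p‖ ^ 2 * ‖q‖ ^ 2) - K * inner ℝ p q
      = -(√3 * (K * |p.cross q|)) := by
    rw [apollonius_inner_eq hsp2 hsq2]
    refine eq_neg_sqrt_mul_of_sq_eq ?_ (by positivity) (by norm_num) ?_
    · rw [← power_mul_cross_eq_inCircleDet hop hoq ho]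
      nlinarith [sq_nonneg (p.cross q)]
    · rw [mul_pow K, sq_abs]
      linear_combination p.cross q ^ 2 * apollonius_inCircleDet_sq hsp2 hsq2
  have hcS := cos_angle_mul_norm_mul_norm (p - s) (q - s)
  rw [norm_sub_rev p, norm_sub_rev q, ← inner_neg_neg, neg_sub, neg_sub] at hcS
  have hcC := cos_angle_mul_norm_mul_norm p q
  have hsC := sin_angle_mul_norm_mul_norm p q
  have hK : ‖s - p‖ * ‖s - q‖ * (‖p‖ * ‖q‖) = K := by
    linear_combination ‖s - q‖ * ‖p‖ * hsp + ‖s‖ * ‖p - q‖ * hsq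
  have hsp0 : s - p ≠ 0 := by
    rw [sub_ne_zero]
    rintro rfl
    simp [hp0, sub_eq_zero, hpq] at hsp
  have hsq0 : s - q ≠ 0 := by
    rw [sub_ne_zero]
    rintro rfl
    simp [hq0, sub_eq_zero, hpq] at hsq
  rw [cos_add, cos_pi_div_three, sin_pi_div_three]
  refine mul_left_cancel₀
    (show 2 * (‖s - p‖ * ‖s - q‖) * (‖p‖ ^ 2 * ‖q‖ ^ 2) ≠ 0 by positivity) ?_
  linear_combination 2 * (‖p‖ ^ 2 * ‖q‖ ^ 2) * hcS + hkey
    - ‖s - p‖ * ‖s - q‖ * (‖p‖ * ‖q‖) * hcC + √3 * ‖s - p‖ * ‖s - q‖ * (‖p‖ * ‖q‖) * hsC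
    + (√3 * |p.cross q| - inner ℝ p q) * hK

end Pt

theorem stmt5_general (A B C S : Pt)
    (hABC : AffineIndependent ℝ ![A, B, C])
    (hC : ∠ B C A < 2 * π / 3)
    (hS : IsFirstIsodynamic A B C S) :
    ∠ A S B = ∠ A C B + π / 3 := by
  obtain ⟨hSB, hSA, -, O, r, hOA, hOB, hOC, hOS⟩ := hS
  rw [dist_comm B A] at hSA
  have hAC : A ≠ C := by simpa using hABC.injective.ne (show (0 : Fin 3) ≠ 2 by decide)
  have hBC : B ≠ C := by simpa using hABC.injective.ne (show (1 : Fin 3) ≠ 2 by decide)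
  have hAB : A ≠ B := by simpa using hABC.injective.ne (show (0 : Fin 3) ≠ 1 by decide)
  have hcos : cos (∠ A S B) = cos (∠ A C B + π / 3) := by
    simp only [EuclideanGeometry.angle, vsub_eq_sub, ← sub_sub_sub_cancel_right A S C,
      ← sub_sub_sub_cancel_right B S C]
    refine Pt.cos_angle_sub_sub_eq_cos_add_pi_div_three (o := O - C) (r := r)
      (sub_ne_zero.2 hAC) (sub_ne_zero.2 hBC) (by simpa using hAB) ?_ ?_ ?_ ?_ ?_ ?_ <;>
    simpa only [sub_sub_sub_cancel_right, ← dist_eq_norm]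
  exact injOn_cos ⟨angle_nonneg _ _ _, angle_le_pi _ _ _⟩
    ⟨add_nonneg (angle_nonneg _ _ _) (by positivity), by rw [angle_comm]; linarith⟩ hcos

theorem stmt5 (A B C S : Pt)
    (hABC : AffineIndependent ℝ ![A, B, C])
    (hA : ∠ B A C < 2 * π / 3) (hB : ∠ A B C < 2 * π / 3) (hC : ∠ B C A < 2 * π / 3)
    (hS : IsFirstIsodynamic A B C S) :
    ∠ A S B = ∠ A C B + π / 3 :=
  stmt5_general A B C S hABC hC hS
end
end

section
/- If triangle ABC has angle B equal to 120°, then its first isodynamic point S lies on segment AC. -/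
open EuclideanGeometry Real

noncomputable section

/-!
Put `B` at the origin and write `S - B = α • (A - B) + β • (C - B)`. Since `∠ABC = 2π/3`, every
squared distance from `S` to a vertex is an explicit quadratic in `α, β` and the side lengths
`a = BC`, `c = AB`. Two of the Apollonius conditions are circles; subtracting their equations
gives a line (through both isodynamic points), and substituting it leaves a quadratic in `α` with
the roots `α = β = -ac / (a² - ac + c²)` (the second isodynamic point, which has positive power
with respect to the circumcircle) and `α = a / (a + c)`, `β = c / (a + c)`: the foot of the
bisector from `B`, which lies on `AC`.
-/

open RealInnerProductSpace Module

theorem AffineIndependent.linearIndependent_sub_sub {k V : Type*} [Ring k] [AddCommGroup V]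
    [Module k V] {A B C : V}
    (h : AffineIndependent k ![A, B, C]) : LinearIndependent k ![A - B, C - B] := by
  rw [affineIndependent_iff_linearIndependent_vsub k _ (1 : Fin 3)] at h
  have heq : ![A - B, C - B] = (fun i : {x : Fin 3 // x ≠ 1} => ![A, B, C] i -ᵥ ![A, B, C] 1) ∘
      ![⟨0, by decide⟩, ⟨2, by decide⟩] := by
    ext i; fin_cases i <;> rfl
  rw [heq]
  exact h.comp _ (by decide)

theorem AffineIndependent.exists_sub_eq_smul_sub_add_smul_sub {k V : Type*} [Field k]
    [AddCommGroup V] [Module k V] [FiniteDimensional k V] (hV : finrank k V = 2) {A B C : V} (h : AffineIndependent k ![A, B, C]) (S : V) :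
    ∃ α β : k, S - B = α • (A - B) + β • (C - B) := by
  have hspan := h.linearIndependent_sub_sub.span_eq_top_of_card_eq_finrank (by simp [hV])
  rw [Matrix.range_cons_cons_empty] at hspan
  obtain ⟨α, β, hαβ⟩ := Submodule.mem_span_pair.1 (hspan ▸ Submodule.mem_top : S - B ∈ _)
  exact ⟨α, β, hαβ.symm⟩

theorem mem_segment_of_sub_eq_smul_sub_add_smul_sub {R V : Type*} [CommRing R] [PartialOrder R]
    [AddCommGroup V] [Module R V] {A B C S : V} {α β : R}
    (hS : S - B = α • (A - B) + β • (C - B)) (hα : 0 ≤ α) (hβ : 0 ≤ β) (hαβ : α + β = 1) :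
    S ∈ segment R A C :=
  ⟨α, β, hα, hβ, hαβ, by linear_combination (norm := module) hαβ • B - hS⟩

section

variable {V : Type*} [NormedAddCommGroup V] [InnerProductSpace ℝ V]

theorem inner_eq_neg_half_mul_norm_of_angle_eq_two_pi_div_three {u v : V}
    (h : InnerProductGeometry.angle u v = 2 * π / 3) : ⟪u, v⟫ = -(‖u‖ * ‖v‖) / 2 := by
  rw [← InnerProductGeometry.cos_angle_mul_norm_mul_norm, h,
    show 2 * π / 3 = π - π / 3 by ring, cos_pi_sub, cos_pi_div_three]
  ring

theorem norm_smul_add_smul_sq_of_angle_eq_two_pi_div_three {u v : V}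
    (h : InnerProductGeometry.angle u v = 2 * π / 3) (p q : ℝ) :
    ‖p • u + q • v‖ ^ 2 = p ^ 2 * ‖u‖ ^ 2 - p * q * (‖u‖ * ‖v‖) + q ^ 2 * ‖v‖ ^ 2 := by
  rw [norm_add_sq_real, norm_smul, norm_smul, real_inner_smul_left, real_inner_smul_right,
    inner_eq_neg_half_mul_norm_of_angle_eq_two_pi_div_three h, Real.norm_eq_abs,
    Real.norm_eq_abs, mul_pow, mul_pow, sq_abs, sq_abs]
  ring

theorem two_mul_inner_sub_sub_of_dist_eq {O A B : V} (h : dist O A = dist O B) :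
    2 * ⟪O - B, A - B⟫ = ‖A - B‖ ^ 2 := by
  have hOA := norm_sub_sq_real (O - B) (A - B)
  rw [sub_sub_sub_cancel_right, ← dist_eq_norm, ← dist_eq_norm, h] at hOA
  linarith

theorem dist_sq_sub_sq_eq_of_sub_eq {O A B C S : V} {r α β : ℝ} (hA : dist O A = r)
    (hB : dist O B = r) (hC : dist O C = r) (hS : S - B = α • (A - B) + β • (C - B)) :
    dist O S ^ 2 - r ^ 2 = ‖S - B‖ ^ 2 - α * ‖A - B‖ ^ 2 - β * ‖C - B‖ ^ 2 := by
  have hu := two_mul_inner_sub_sub_of_dist_eq (hA.trans hB.symm)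
  have hv := two_mul_inner_sub_sub_of_dist_eq (hC.trans hB.symm)
  rw [dist_eq_norm, ← sub_sub_sub_cancel_right O S B, norm_sub_sq_real, ← dist_eq_norm, hB, hS,
    inner_add_right, real_inner_smul_right, real_inner_smul_right, ← hS]
  linear_combination (-α) * hu - β * hv

theorem apollonius_eqs_of_angle_eq_two_pi_div_three {A B C S : V} {a c α β : ℝ}
    (hB : InnerProductGeometry.angle (A - B) (C - B) = 2 * π / 3) (ha : ‖C - B‖ = a)
    (hc : ‖A - B‖ = c)
    (hS : S - B = α • (A - B) + β • (C - B))
    (h₁ : dist S B * dist A C = dist S C * dist A B)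
    (h₂ : dist S A * dist B C = dist S C * dist B A) :
    (α ^ 2 * c ^ 2 - α * β * (a * c) + β ^ 2 * a ^ 2) * (c ^ 2 + a * c + a ^ 2) =
        (α ^ 2 * c ^ 2 - α * (β - 1) * (a * c) + (β - 1) ^ 2 * a ^ 2) * c ^ 2 ∧
      ((α - 1) ^ 2 * c ^ 2 - (α - 1) * β * (a * c) + β ^ 2 * a ^ 2) * a ^ 2 =
        (α ^ 2 * c ^ 2 - α * (β - 1) * (a * c) + (β - 1) ^ 2 * a ^ 2) * c ^ 2 := by
  have hSA : S - A = (α - 1) • (A - B) + β • (C - B) := by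
    rw [← sub_sub_sub_cancel_right S A B, hS]; module
  have hSC : S - C = α • (A - B) + (β - 1) • (C - B) := by
    rw [← sub_sub_sub_cancel_right S C B, hS]; module
  have hAC : A - C = (1 : ℝ) • (A - B) + (-1 : ℝ) • (C - B) := by module
  rw [dist_comm B C, dist_comm B A] at h₂
  have hsq₁ := congrArg (· ^ 2) h₁
  have hsq₂ := congrArg (· ^ 2) h₂
  simp only [mul_pow, dist_eq_norm, hS, hSA, hSC, hAC,
    norm_smul_add_smul_sq_of_angle_eq_two_pi_div_three hB, ha, hc] at hsq₁ hsq₂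
  constructor
  · linear_combination hsq₁
  · linear_combination hsq₂

end

theorem isodynamic_weights_eq_or_eq {a c α β : ℝ} (ha : 0 < a) (hc : 0 < c)
    (h₁ : (α ^ 2 * c ^ 2 - α * β * (a * c) + β ^ 2 * a ^ 2) * (c ^ 2 + a * c + a ^ 2) =
      (α ^ 2 * c ^ 2 - α * (β - 1) * (a * c) + (β - 1) ^ 2 * a ^ 2) * c ^ 2)
    (h₂ : ((α - 1) ^ 2 * c ^ 2 - (α - 1) * β * (a * c) + β ^ 2 * a ^ 2) * a ^ 2 =
      (α ^ 2 * c ^ 2 - α * (β - 1) * (a * c) + (β - 1) ^ 2 * a ^ 2) * c ^ 2) :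
    (α = a / (a + c) ∧ β = c / (a + c)) ∨
      (α = -(a * c) / (a ^ 2 - a * c + c ^ 2) ∧ β = -(a * c) / (a ^ 2 - a * c + c ^ 2)) := by
  have hm : 0 < a ^ 2 - a * c + c ^ 2 := by nlinarith [sq_nonneg (a - c), mul_pos ha hc]
  have hd : 0 < a * (a ^ 2 + 2 * c ^ 2) := by positivity
  have hE₁ : (a + c) * (α ^ 2 * c ^ 2 - α * β * (a * c) + β ^ 2 * a ^ 2) =
      c ^ 2 * (a + α * c - 2 * β * a) :=
    mul_left_cancel₀ ha.ne' (by linear_combination h₁)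
  have hE₂ : a * c * (a - c) - α * c * (2 * a ^ 2 + c ^ 2) + β * a * (a ^ 2 + 2 * c ^ 2) = 0 :=
    mul_left_cancel₀ hc.ne' (by linear_combination h₂ - (a - c) * hE₁)
  have hquad : ((a + c) * α - a) * ((a ^ 2 - a * c + c ^ 2) * α + a * c) *
      (3 * a ^ 2 * c ^ 2 * (a ^ 2 + a * c + c ^ 2)) = 0 := by
    -- eliminate `β` between `hE₁` and `hE₂`
    linear_combination (a * (a ^ 2 + 2 * c ^ 2)) ^ 2 * hE₁ -
      (((a + c) * a ^ 2) * ((a * (a ^ 2 + 2 * c ^ 2)) * β -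
        (a * c * (a - c) - α * c * (2 * a ^ 2 + c ^ 2))) +
        (-((a + c) * a * c * α) + 2 * a * c ^ 2) * (a * (a ^ 2 + 2 * c ^ 2))) * hE₂
  rcases mul_eq_zero.1 ((mul_eq_zero.1 hquad).resolve_right (by positivity)) with hα | hα
  · have hβ : ((a + c) * β - c) * (a * (a ^ 2 + 2 * c ^ 2)) = 0 := by
      linear_combination (a + c) * hE₂ + (c * (2 * a ^ 2 + c ^ 2)) * hα
    replace hβ := (mul_eq_zero.1 hβ).resolve_right hd.ne'
    left
    constructor <;> field_simp <;> linarith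
  · have hβ : ((a ^ 2 - a * c + c ^ 2) * β + a * c) * (a * (a ^ 2 + 2 * c ^ 2)) = 0 := by
      linear_combination (a ^ 2 - a * c + c ^ 2) * hE₂ + (c * (2 * a ^ 2 + c ^ 2)) * hα
    replace hβ := (mul_eq_zero.1 hβ).resolve_right hd.ne'
    right
    constructor <;> rw [eq_div_iff hm.ne'] <;> linarith

theorem isodynamic_weights_eq {a c α β : ℝ} (ha : 0 < a) (hc : 0 < c)
    (h₁ : (α ^ 2 * c ^ 2 - α * β * (a * c) + β ^ 2 * a ^ 2) * (c ^ 2 + a * c + a ^ 2) =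
      (α ^ 2 * c ^ 2 - α * (β - 1) * (a * c) + (β - 1) ^ 2 * a ^ 2) * c ^ 2)
    (h₂ : ((α - 1) ^ 2 * c ^ 2 - (α - 1) * β * (a * c) + β ^ 2 * a ^ 2) * a ^ 2 =
      (α ^ 2 * c ^ 2 - α * (β - 1) * (a * c) + (β - 1) ^ 2 * a ^ 2) * c ^ 2)
    (hpow : α ^ 2 * c ^ 2 - α * β * (a * c) + β ^ 2 * a ^ 2 - α * c ^ 2 - β * a ^ 2 < 0) :
    α = a / (a + c) ∧ β = c / (a + c) := by
  refine (isodynamic_weights_eq_or_eq ha hc h₁ h₂).resolve_right ?_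
  rintro ⟨hα, hβ⟩
  set t := -(a * c) / (a ^ 2 - a * c + c ^ 2)
  have hm : 0 < a ^ 2 - a * c + c ^ 2 := by nlinarith [sq_nonneg (a - c), mul_pos ha hc]
  have ht : t * (a ^ 2 - a * c + c ^ 2) = -(a * c) := div_mul_cancel₀ _ hm.ne'
  have ht_neg : t < 0 := div_neg_of_neg_of_pos (by nlinarith [mul_pos ha hc]) hm
  subst hα hβ
  have hpow_eq : t ^ 2 * c ^ 2 - t * t * (a * c) + t ^ 2 * a ^ 2 - t * c ^ 2 - t * a ^ 2 =
      -t * (a ^ 2 + a * c + c ^ 2) := by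
    linear_combination t * ht
  have hpow_pos : 0 < -t * (a ^ 2 + a * c + c ^ 2) := mul_pos (neg_pos.2 ht_neg) (by positivity)
  linarith

theorem stmt6 (A B C S : Pt)
    (hABC : AffineIndependent ℝ ![A, B, C])
    (hB : ∠ A B C = 2 * π / 3)
    (hS : IsFirstIsodynamic A B C S) :
    S ∈ segment ℝ A C := by
  obtain ⟨hSB, hSA, -, O, r, hOA, hOB, hOC, hOS⟩ := hS
  obtain ⟨α, β, hαβ⟩ := hABC.exists_sub_eq_smul_sub_add_smul_sub finrank_euclideanSpace_fin S
  have hc : 0 < ‖A - B‖ := norm_pos_iff.2 <| sub_ne_zero.2 <| by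
    simpa using hABC.injective.ne (show (0 : Fin 3) ≠ 1 by decide)
  have ha : 0 < ‖C - B‖ := norm_pos_iff.2 <| sub_ne_zero.2 <| by
    simpa using hABC.injective.ne (show (2 : Fin 3) ≠ 1 by decide)
  have hangle : InnerProductGeometry.angle (A - B) (C - B) = 2 * π / 3 := hB
  have hpow := dist_sq_sub_sq_eq_of_sub_eq hOA hOB hOC hαβ
  rw [hαβ, norm_smul_add_smul_sq_of_angle_eq_two_pi_div_three hangle] at hpow
  have hinside : dist O S ^ 2 < r ^ 2 := pow_lt_pow_left₀ hOS dist_nonneg two_ne_zero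
  obtain ⟨h₁, h₂⟩ := apollonius_eqs_of_angle_eq_two_pi_div_three hangle rfl rfl hαβ hSB hSA
  obtain ⟨rfl, rfl⟩ := isodynamic_weights_eq ha hc h₁ h₂ (by linarith)
  exact mem_segment_of_sub_eq_smul_sub_add_smul_sub hαβ (by positivity) (by positivity)
    (by field_simp)
end
end

section
/- If triangle ABC has angle B equal to 120°, then the line BS bisects angle ABC, where S is the first isodynamic point. -/
/-!
Put `B` at the origin and use the unit vectors `e`, `f` along `BA`, `BC`. Since `⟪e, f⟫ = -1/2`,
the squared length of `x • e + y • f` is the Eisenstein norm `x² - x y + y²`, so the Apollonius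
conditions on `S = B + x • e + y • f` become polynomial equations in `x`, `y`, `c = BA`, `a = BC`.
Two of them combine to `(a x - c y) (x - y) = 0`. The factor `a x = c y` is the line of the median
from `B`, on which the second isodynamic point lies, with `x, y < 0`; being inside the circumcircle
rules it out. Hence `x = y`, i.e. `S - B` is a multiple of the bisecting vector `e + f`.
-/

open EuclideanGeometry Real

noncomputable section

open Module RealInnerProductSpace

theorem Real.cos_two_pi_div_three : cos (2 * π / 3) = -(1 / 2) := by
  rw [show 2 * π / 3 = π - π / 3 by ring, cos_pi_sub, cos_pi_div_three]

def eisensteinNorm (x y : ℝ) : ℝ := x ^ 2 - x * y + y ^ 2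

theorem apollonius_factor {a c x y : ℝ} (ha : 0 < a) (hc : 0 < c)
    (h₁ : eisensteinNorm x y * eisensteinNorm c (-a) = eisensteinNorm x (y - a) * c ^ 2)
    (h₂ : eisensteinNorm (x - c) y * a ^ 2 = eisensteinNorm x (y - a) * c ^ 2) :
    (a * x - c * y) * (x - y) = 0 := by
  unfold eisensteinNorm at h₁ h₂
  have h : 3 * a * c * (a ^ 2 + a * c + c ^ 2) * ((a * x - c * y) * (x - y)) = 0 := by
    linear_combination
      (-(c * (a - c) ^ 2) + ((a - c) * c + (c + 2 * a) * x - (a + 2 * c) * y) * (a - c)) * h₁ -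
        a * ((a - c) * c + (c + 2 * a) * x - (a + 2 * c) * y) * h₂
  exact (mul_eq_zero.mp h).resolve_left (by positivity)

theorem eq_of_apollonius {a c x y : ℝ} (ha : 0 < a) (hc : 0 < c)
    (h₁ : eisensteinNorm x y * eisensteinNorm c (-a) = eisensteinNorm x (y - a) * c ^ 2)
    (h₂ : eisensteinNorm (x - c) y * a ^ 2 = eisensteinNorm x (y - a) * c ^ 2)
    (hin : eisensteinNorm x y < c * x + a * y) :
    x = y := by
  rcases mul_eq_zero.mp (apollonius_factor ha hc h₁ h₂) with hmed | hxy
  · unfold eisensteinNorm at h₁ h₂ hin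
    rcases eq_or_ne a c with rfl | hac
    · exact mul_left_cancel₀ ha.ne' (by linarith)
    have hrad : a * c * (c - a) * (x * (c ^ 2 - a * c + a ^ 2) + a * c ^ 2) = 0 := by
      linear_combination c * ((a - c) * h₁ - a * h₂) - a * c * (2 * c ^ 2 + a ^ 2) * hmed
    have hne : a * c * (c - a) ≠ 0 := mul_ne_zero (by positivity) (sub_ne_zero.mpr hac.symm)
    have hlin := (mul_eq_zero.mp hrad).resolve_left hne
    have hx : x < 0 := by nlinarith [sq_nonneg (c - a), mul_pos ha hc, mul_pos (mul_pos ha hc) hc]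
    have hy : y < 0 := by nlinarith
    nlinarith [sq_nonneg (x - y), sq_nonneg x, sq_nonneg y]
  · linarith

namespace InnerProductGeometry

variable {V : Type*} [NormedAddCommGroup V] [InnerProductSpace ℝ V]

theorem norm_smul_add_smul_sq_of_inner_eq_neg_half {e f : V} (he : ‖e‖ = 1) (hf : ‖f‖ = 1)
    (hef : ⟪e, f⟫ = -(1 / 2)) (x y : ℝ) :
    ‖x • e + y • f‖ ^ 2 = eisensteinNorm x y := by
  rw [eisensteinNorm, norm_add_sq_real, norm_smul, norm_smul, real_inner_smul_left,
    real_inner_smul_right, he, hf, hef, Real.norm_eq_abs, Real.norm_eq_abs, mul_pow, mul_pow,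
    sq_abs, sq_abs]
  ring

theorem linearIndependent_pair_of_inner_eq_neg_half {e f : V} (he : ‖e‖ = 1) (hf : ‖f‖ = 1)
    (hef : ⟪e, f⟫ = -(1 / 2)) : LinearIndependent ℝ ![e, f] := by
  refine LinearIndependent.pair_iff.mpr fun s t hst => ?_
  have h := norm_smul_add_smul_sq_of_inner_eq_neg_half he hf hef s t
  rw [hst, norm_zero, eisensteinNorm] at h
  constructor <;> nlinarith [sq_nonneg (s - t), sq_nonneg (s + t)]

theorem exists_unit_frame_of_angle_eq_two_pi_div_three {u v : V}
    (h : angle u v = 2 * π / 3) :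
    ∃ (e f : V) (c a : ℝ), 0 < c ∧ 0 < a ∧ ‖e‖ = 1 ∧ ‖f‖ = 1 ∧ ⟪e, f⟫ = -(1 / 2) ∧
      u = c • e ∧ v = a • f := by
  have hu : u ≠ 0 := by
    rintro rfl
    rw [angle_zero_left] at h
    linarith [pi_pos]
  have hv : v ≠ 0 := by
    rintro rfl
    rw [angle_zero_right] at h
    linarith [pi_pos]
  refine ⟨‖u‖⁻¹ • u, ‖v‖⁻¹ • v, ‖u‖, ‖v‖, norm_pos_iff.mpr hu, norm_pos_iff.mpr hv,
    norm_smul_inv_norm hu, norm_smul_inv_norm hv, ?_,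
    (smul_inv_smul₀ (norm_ne_zero_iff.mpr hu) u).symm,
    (smul_inv_smul₀ (norm_ne_zero_iff.mpr hv) v).symm⟩
  rw [real_inner_smul_left, real_inner_smul_right, ← cos_two_pi_div_three, ← h, cos_angle]
  field_simp

theorem inner_eq_half_norm_sq_of_norm_sub_eq {o u : V} (h : ‖o - u‖ = ‖o‖) :
    ⟪o, u⟫ = ‖u‖ ^ 2 / 2 := by
  have := congrArg (· ^ 2) h
  simp only [norm_sub_sq_real] at this
  linarith

theorem norm_sq_lt_two_inner_of_norm_sub_lt {o w : V} (h : ‖o - w‖ < ‖o‖) :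
    ‖w‖ ^ 2 < 2 * ⟪o, w⟫ := by
  have := pow_lt_pow_left₀ h (norm_nonneg _) two_ne_zero
  rw [norm_sub_sq_real] at this
  linarith

theorem angle_smul_add_eq_angle_smul_add {e f : V} (he : ‖e‖ = 1) (hf : ‖f‖ = 1) (t : ℝ) :
    angle e (t • (e + f)) = angle (t • (e + f)) f := by
  unfold angle
  rw [he, hf, one_mul, mul_one, real_inner_smul_right, real_inner_smul_left, inner_add_right,
    inner_add_left, real_inner_self_eq_norm_sq, real_inner_self_eq_norm_sq, he, hf, real_inner_comm,
    add_comm]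

theorem angle_eq_of_apollonius (hV : finrank ℝ V = 2) {u v w o : V}
    (huv : angle u v = 2 * π / 3)
    (h₁ : ‖w‖ * ‖u - v‖ = ‖w - v‖ * ‖u‖)
    (h₂ : ‖w - u‖ * ‖v‖ = ‖w - v‖ * ‖u‖)
    (hou : ‖o - u‖ = ‖o‖) (hov : ‖o - v‖ = ‖o‖) (how : ‖o - w‖ < ‖o‖) :
    angle u w = angle w v := by
  obtain ⟨e, f, c, a, hc, ha, he, hf, hef, rfl, rfl⟩ :=
    exists_unit_frame_of_angle_eq_two_pi_div_three huv
  have hspan := (linearIndependent_pair_of_inner_eq_neg_half he hf hef)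
    |>.span_eq_top_of_card_eq_finrank (by simp [hV])
  rw [Matrix.range_cons_cons_empty] at hspan
  obtain ⟨x, y, rfl⟩ := Submodule.mem_span_pair.mp (hspan ▸ Submodule.mem_top (x := w))
  have hN := norm_smul_add_smul_sq_of_inner_eq_neg_half he hf hef
  have hce : ‖c • e‖ = c := by rw [norm_smul, he, mul_one, Real.norm_of_nonneg hc.le]
  have haf : ‖a • f‖ = a := by rw [norm_smul, hf, mul_one, Real.norm_of_nonneg ha.le]
  have hoe : ⟪o, e⟫ = c / 2 := by
    have := inner_eq_half_norm_sq_of_norm_sub_eq hou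
    rw [real_inner_smul_right, hce] at this
    exact mul_left_cancel₀ hc.ne' (by linear_combination this)
  have hof : ⟪o, f⟫ = a / 2 := by
    have := inner_eq_half_norm_sq_of_norm_sub_eq hov
    rw [real_inner_smul_right, haf] at this
    exact mul_left_cancel₀ ha.ne' (by linear_combination this)
  have hin := norm_sq_lt_two_inner_of_norm_sub_lt how
  rw [inner_add_right, real_inner_smul_right, real_inner_smul_right, hoe, hof, hN] at hin
  have hu_v : c • e - a • f = c • e + (-a) • f := by module
  have hw_u : x • e + y • f - c • e = (x - c) • e + y • f := by module
  have hw_v : x • e + y • f - a • f = x • e + (y - a) • f := by module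
  have hxy : x = y := by
    refine eq_of_apollonius ha hc ?_ ?_ (by linarith)
    · have h := congrArg (· ^ 2) h₁
      simpa only [mul_pow, hu_v, hw_v, hce, hN] using h
    · have h := congrArg (· ^ 2) h₂
      simpa only [mul_pow, hw_u, hw_v, hce, haf, hN] using h
  rw [hxy, ← smul_add, angle_smul_left_of_pos _ _ hc, angle_smul_right_of_pos _ _ ha,
    angle_smul_add_eq_angle_smul_add he hf]

end InnerProductGeometry

theorem stmt7_general (A B C S : Pt)
    (hB : ∠ A B C = 2 * π / 3)
    (hS : IsFirstIsodynamic A B C S) :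
    ∠ A B S = ∠ S B C := by
  obtain ⟨h₁, h₂, -, O, r, hOA, rfl, hOC, hOS⟩ := hS
  rw [dist_comm B C, dist_comm B A] at h₂
  refine InnerProductGeometry.angle_eq_of_apollonius (o := O - B) finrank_euclideanSpace_fin hB
    ?_ ?_ ?_ ?_ ?_ <;>
    simpa only [vsub_eq_sub, sub_sub_sub_cancel_right, ← dist_eq_norm]

theorem stmt7 (A B C S : Pt)
    (hABC : AffineIndependent ℝ ![A, B, C])
    (hB : ∠ A B C = 2 * π / 3)
    (hS : IsFirstIsodynamic A B C S) :
    ∠ A B S = ∠ S B C :=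
  stmt7_general A B C S hB hS
end
end

section
/- For the isodynamic points S and S' of a triangle ABC, SA/S'A = SB/S'B = SC/S'C; i.e., the ratio of distances to the two isodynamic points is the same for all three vertices. -/
open EuclideanGeometry Real

noncomputable section

/-- `S'` is the second isodynamic point of triangle `ABC`: it lies on the three
Apollonius circles and lies outside the circumcircle. -/
def IsSecondIsodynamic (A B C S : Pt) : Prop :=
  dist S B * dist A C = dist S C * dist A B ∧
  dist S A * dist B C = dist S C * dist B A ∧
  dist S A * dist C B = dist S B * dist C A ∧
  ∃ O r, dist O A = r ∧ dist O B = r ∧ dist O C = r ∧ dist O S > r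

theorem stmt10 (A B C S S' : Pt)
    (hABC : AffineIndependent ℝ ![A, B, C])
    (hne : ¬ (dist A B = dist B C ∧ dist B C = dist C A))
    (hS : IsFirstIsodynamic A B C S) (hS' : IsSecondIsodynamic A B C S') :
    dist S A / dist S' A = dist S B / dist S' B ∧
    dist S B / dist S' B = dist S C / dist S' C := by
  obtain ⟨h1, h2, h3, O, r, hOA, hOB, hOC, hOS⟩ := hS
  obtain ⟨h1', h2', h3', O', r', hOA', hOB', hOC', hOS'⟩ := hS'
  have hinj := hABC.injective
  have hBA : B ≠ A := fun h => by
    have : (1 : Fin 3) = 0 := hinj (show ![A, B, C] 1 = ![A, B, C] 0 by simp [h])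
    simp at this
  have hCA : C ≠ A := fun h => by
    have : (2 : Fin 3) = 0 := hinj (show ![A, B, C] 2 = ![A, B, C] 0 by simp [h])
    simp at this
  have hCB : C ≠ B := fun h => by
    have : (2 : Fin 3) = 1 := hinj (show ![A, B, C] 2 = ![A, B, C] 1 by simp [h])
    simp at this
  have hS'A : dist S' A ≠ 0 := by
    rw [dist_ne_zero]; intro h; rw [h, hOA'] at hOS'; exact lt_irrefl _ hOS'
  have hS'B : dist S' B ≠ 0 := by
    rw [dist_ne_zero]; intro h; rw [h, hOB'] at hOS'; exact lt_irrefl _ hOS'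
  have hS'C : dist S' C ≠ 0 := by
    rw [dist_ne_zero]; intro h; rw [h, hOC'] at hOS'; exact lt_irrefl _ hOS'
  have hdCB : dist C B ≠ 0 := dist_ne_zero.mpr hCB
  have hdAC : dist A C ≠ 0 := dist_ne_zero.mpr (Ne.symm hCA)
  constructor
  · rw [div_eq_div_iff hS'A hS'B]
    have : dist S A * dist S' B * dist C B = dist S B * dist S' A * dist C B := by
      linear_combination dist S' B * h3 - dist S B * h3'
    exact mul_right_cancel₀ hdCB this
  · rw [div_eq_div_iff hS'B hS'C]
    have : dist S B * dist S' C * dist A C = dist S C * dist S' B * dist A C := by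
      linear_combination dist S' C * h1 - dist S C * h1'
    exact mul_right_cancel₀ hdAC this
end
end

section
/- The pedal triangle of the first isodynamic point of a triangle is equilateral. -/
open EuclideanGeometry Real

noncomputable section

/-!
The feet `Q`, `R` lie on the circle with diameter `SA`, and `QR` is a chord of it subtending the
angle `A`, so `QR = SA · sin A`; likewise `RP = SB · sin B` and `PQ = SC · sin C`. By the law of
sines `sin A : sin B : sin C = BC : CA : AB`, so the three sides are proportional to
`SA · BC`, `SB · CA`, `SC · AB`, which are equal because `S` lies on the three Apollonius circles.
-/

open InnerProductGeometry

section InnerProductSpace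

variable {V : Type*} [NormedAddCommGroup V] [InnerProductSpace ℝ V]

def IsPerpFoot (S P X Y : V) : Prop :=
  Collinear ℝ ({P, X, Y} : Set V) ∧ inner ℝ (S - P) (Y - X) = 0

theorem IsPerpFoot.symm {S P X Y : V} (h : IsPerpFoot S P X Y) : IsPerpFoot S P Y X := by
  refine ⟨by rw [Set.pair_comm]; exact h.1, ?_⟩
  rw [← neg_sub Y X, inner_neg_right, h.2, neg_zero]

theorem IsPerpFoot.eq_add_smul {S P X Y : V} (h : IsPerpFoot S P X Y) (hXY : X ≠ Y) :
    P = X + (inner ℝ (S - X) (Y - X) / ‖Y - X‖ ^ 2) • (Y - X) := by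
  obtain ⟨t, rfl⟩ := mem_affineSpan_pair_iff_exists_lineMap_eq.1
    (h.1.mem_affineSpan_of_mem_of_ne (p₃ := P) (by simp) (by simp) (by simp) hXY)
  have hYX : ‖Y - X‖ ≠ 0 := norm_ne_zero_iff.2 (sub_ne_zero.2 hXY.symm)
  have ht : inner ℝ (S - X) (Y - X) = t * ‖Y - X‖ ^ 2 := by
    have hperp := h.2
    rw [AffineMap.lineMap_apply_module',
      show S - (t • (Y - X) + X) = (S - X) - t • (Y - X) by abel, inner_sub_left,
      real_inner_smul_left, real_inner_self_eq_norm_sq] at hperp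
    linarith
  rw [ht, mul_div_cancel_right₀ _ (pow_ne_zero 2 hYX), AffineMap.lineMap_apply_module', add_comm]

theorem IsPerpFoot.dist_sq_mul {S P Q X Y Z : V} (hP : IsPerpFoot S P X Y)
    (hQ : IsPerpFoot S Q X Z) (hXY : X ≠ Y) (hXZ : X ≠ Z) :
    dist P Q ^ 2 * (‖Y - X‖ ^ 2 * ‖Z - X‖ ^ 2) =
      inner ℝ (S - X) (Y - X) ^ 2 * ‖Z - X‖ ^ 2 + inner ℝ (S - X) (Z - X) ^ 2 * ‖Y - X‖ ^ 2 -
        2 * inner ℝ (S - X) (Y - X) * inner ℝ (S - X) (Z - X) * inner ℝ (Y - X) (Z - X) := by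
  have hy : ‖Y - X‖ ≠ 0 := norm_ne_zero_iff.2 (sub_ne_zero.2 hXY.symm)
  have hz : ‖Z - X‖ ≠ 0 := norm_ne_zero_iff.2 (sub_ne_zero.2 hXZ.symm)
  rw [hP.eq_add_smul hXY, hQ.eq_add_smul hXZ, dist_add_left, dist_eq_norm,
    ← real_inner_self_eq_norm_sq]
  generalize S - X = s, Y - X = y, Z - X = z at *
  simp only [inner_sub_left, inner_sub_right, real_inner_smul_left, real_inner_smul_right,
    real_inner_comm y z]
  simp only [real_inner_self_eq_norm_sq]
  field_simp
  ring

end InnerProductSpace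

theorem Pt.inner_eq_s12 (x y : Pt) : inner ℝ x y = x 0 * y 0 + x 1 * y 1 := by
  simp [PiLp.inner_apply, Fin.sum_univ_two, mul_comm]

theorem Pt.norm_sq_eq_s12 (x : Pt) : ‖x‖ ^ 2 = x 0 ^ 2 + x 1 ^ 2 := by
  rw [← real_inner_self_eq_norm_sq, Pt.inner_eq_s12]; ring

/-- The Gram determinant of three vectors in the plane vanishes. -/
theorem Pt.inner_sq_gram (s y z : Pt) :
    inner ℝ s y ^ 2 * ‖z‖ ^ 2 + inner ℝ s z ^ 2 * ‖y‖ ^ 2 -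
        2 * inner ℝ s y * inner ℝ s z * inner ℝ y z =
      ‖s‖ ^ 2 * (‖y‖ ^ 2 * ‖z‖ ^ 2 - inner ℝ y z ^ 2) := by
  simp only [Pt.inner_eq_s12, Pt.norm_sq_eq_s12]
  ring

theorem IsPerpFoot.dist_eq_dist_mul_sin_angle {S P Q X Y Z : Pt} (hP : IsPerpFoot S P X Y)
    (hQ : IsPerpFoot S Q X Z) (hXY : X ≠ Y) (hXZ : X ≠ Z) :
    dist P Q = dist S X * sin (∠ Y X Z) := by
  have hy : ‖Y - X‖ ≠ 0 := norm_ne_zero_iff.2 (sub_ne_zero.2 hXY.symm)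
  have hz : ‖Z - X‖ ≠ 0 := norm_ne_zero_iff.2 (sub_ne_zero.2 hXZ.symm)
  have hθ : ∠ Y X Z = InnerProductGeometry.angle (Y - X) (Z - X) := rfl
  have key : (dist P Q * (‖Y - X‖ * ‖Z - X‖)) ^ 2 =
      (dist S X * sin (∠ Y X Z) * (‖Y - X‖ * ‖Z - X‖)) ^ 2 := by
    calc _ = dist P Q ^ 2 * (‖Y - X‖ ^ 2 * ‖Z - X‖ ^ 2) := by ring
      _ = ‖S - X‖ ^ 2 * (‖Y - X‖ ^ 2 * ‖Z - X‖ ^ 2 - inner ℝ (Y - X) (Z - X) ^ 2) := by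
        rw [hP.dist_sq_mul hQ hXY hXZ, Pt.inner_sq_gram]
      _ = _ := by
        rw [← cos_angle_mul_norm_mul_norm, ← hθ, dist_eq_norm]
        linear_combination -(‖S - X‖ * ‖Y - X‖ * ‖Z - X‖) ^ 2 * sin_sq_add_cos_sq (∠ Y X Z)
  have hsin : 0 ≤ sin (∠ Y X Z) := sin_angle_nonneg _ _
  rw [pow_left_inj₀ (by positivity) (by positivity) two_ne_zero] at key
  exact mul_right_cancel₀ (mul_ne_zero hy hz) key

theorem dist_mul_sin_angle_eq_of_dist_mul_dist_eq {S X Y Z : Pt} (hYZ : Y ≠ Z) (hZX : Z ≠ X)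
    (h : dist S X * dist Y Z = dist S Y * dist Z X) :
    dist S X * sin (∠ Z X Y) = dist S Y * sin (∠ X Y Z) := by
  have hsines := law_sin X Y Z
  refine mul_right_cancel₀ (mul_ne_zero (dist_ne_zero.2 hYZ) (dist_ne_zero.2 hZX)) ?_
  linear_combination sin (∠ X Y Z) * dist Y Z * h - dist S X * dist Y Z * hsines

theorem stmt12 (A B C S P Q R : Pt)
    (hABC : AffineIndependent ℝ ![A, B, C])
    (hS : IsFirstIsodynamic A B C S)
    (hP : Collinear ℝ ({P, B, C} : Set Pt) ∧ (inner ℝ (S - P) (C - B) : ℝ) = 0)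
    (hQ : Collinear ℝ ({Q, C, A} : Set Pt) ∧ (inner ℝ (S - Q) (A - C) : ℝ) = 0)
    (hR : Collinear ℝ ({R, A, B} : Set Pt) ∧ (inner ℝ (S - R) (B - A) : ℝ) = 0)
 :
    dist P Q = dist Q R ∧ dist Q R = dist R P := by
  obtain ⟨-, hSA, hSB, -⟩ := hS
  have hAB : A ≠ B := hABC.injective.ne (show (0 : Fin 3) ≠ 1 by decide)
  have hBC : B ≠ C := hABC.injective.ne (show (1 : Fin 3) ≠ 2 by decide)
  have hCA : C ≠ A := hABC.injective.ne (show (2 : Fin 3) ≠ 0 by decide)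
  have hQR : dist Q R = dist S A * sin (∠ C A B) :=
    IsPerpFoot.dist_eq_dist_mul_sin_angle (IsPerpFoot.symm hQ) hR hCA.symm hAB
  have hRP : dist R P = dist S B * sin (∠ A B C) :=
    IsPerpFoot.dist_eq_dist_mul_sin_angle (IsPerpFoot.symm hR) hP hAB.symm hBC
  have hPQ : dist P Q = dist S C * sin (∠ B C A) :=
    IsPerpFoot.dist_eq_dist_mul_sin_angle (IsPerpFoot.symm hP) hQ hBC.symm hCA
  rw [dist_comm B A] at hSA
  rw [dist_comm C B] at hSB
  rw [hQR, hRP, hPQ]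
  exact ⟨dist_mul_sin_angle_eq_of_dist_mul_dist_eq hAB hBC hSA.symm,
    dist_mul_sin_angle_eq_of_dist_mul_dist_eq hBC hCA hSB⟩
end
end

section
/- The area of the pedal triangle of the first isodynamic point equals 2K²√3 / (a² + b² + c² + 4K√3), where a,b,c are side lengths and K is the area of the original triangle. -/
open EuclideanGeometry Real

noncomputable section

/-
The pedal triangle of `S` has sides `SA sin A`, `SB sin B`, `SC sin C` (each side is a chord of the
circle on a segment `SA`, `SB`, `SC` as diameter).  By the law of sines and the Apollonius relations
`SA · a = SB · b = SC · c` these three sides are equal, so the pedal triangle is equilateral and its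
area is `√3/4 · SA² sin² A`.  It remains to compute `SA`.  In the Gram coordinates of `AB, AC, AS`
the two Apollonius relations are linear in `⟪AB, AS⟫` and `⟪AC, AS⟫`, and the planar Gram relation
then becomes a quadratic equation for `SA²` with roots `2b²c² / (a² + b² + c² ± 4√3 K)`, one for
each isodynamic point; lying inside the circumcircle selects the `+` sign.
-/

open scoped RealInnerProductSpace

section

variable {V P : Type*} [NormedAddCommGroup V] [InnerProductSpace ℝ V] [MetricSpace P]
  [NormedAddTorsor V P]

theorem sin_angle_mul_norm_mul_norm_sq (x y : V) :
    (sin (InnerProductGeometry.angle x y) * (‖x‖ * ‖y‖)) ^ 2 = ‖x‖ ^ 2 * ‖y‖ ^ 2 - ⟪x, y⟫ ^ 2 := by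
  rw [← InnerProductGeometry.cos_angle_mul_norm_mul_norm]
  linear_combination (‖x‖ * ‖y‖) ^ 2 * sin_sq_add_cos_sq (InnerProductGeometry.angle x y)

theorem eq_inner_div_smul_add_of_collinear {S X B C : V}
    (h : Collinear ℝ ({X, B, C} : Set V)) (hBC : B ≠ C) (hSX : ⟪S - X, C - B⟫ = 0) :
    X = (⟪S - C, B - C⟫ / ‖B - C‖ ^ 2) • (B - C) + C := by
  obtain ⟨s, rfl⟩ := mem_affineSpan_pair_iff_exists_lineMap_eq.1 <|
    h.mem_affineSpan_of_mem_of_ne (p₁ := C) (p₂ := B) (p₃ := X) (by simp) (by simp) (by simp)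
      hBC.symm
  have hx : ‖B - C‖ ≠ 0 := norm_ne_zero_iff.2 (sub_ne_zero.2 hBC)
  rw [AffineMap.lineMap_apply, vsub_eq_sub, vadd_eq_add] at hSX ⊢
  rw [show S - (s • (B - C) + C) = (S - C) - s • (B - C) by abel,
    show C - B = -(B - C) by abel, inner_neg_right, inner_sub_left, real_inner_smul_left,
    real_inner_self_eq_norm_sq, neg_eq_zero, sub_eq_zero] at hSX
  rw [hSX]
  field_simp

theorem dist_mul_sin_angle_eq_of_dist_mul_dist_eq_s13 {A B C S : P}
    (h : dist S A * dist B C = dist S C * dist B A) (hBC : B ≠ C) :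
    dist S C * sin (∠ A C B) = dist S A * sin (∠ B A C) := by
  refine mul_right_cancel₀ (dist_ne_zero.2 hBC) ?_
  have hsin := law_sin A C B
  rw [dist_comm C B] at hsin
  linear_combination dist S C * hsin - sin (∠ B A C) * h

theorem dist_mul_dist_mul_sin_angle_div_two_of_dist_eq {p₁ p₂ p₃ : P}
    (h₁₃ : dist p₁ p₃ = dist p₁ p₂) (h₂₃ : dist p₂ p₃ = dist p₁ p₂) :
    dist p₁ p₂ * dist p₁ p₃ * sin (∠ p₂ p₁ p₃) / 2 = √3 / 4 * dist p₁ p₂ ^ 2 := by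
  rcases eq_or_ne p₁ p₂ with rfl | h₁₂
  · simp
  have hd : 0 < dist p₁ p₂ := dist_pos.2 h₁₂
  have hcos : cos (∠ p₂ p₁ p₃) = cos (π / 3) := by
    have := law_cos p₂ p₁ p₃
    rw [dist_comm p₂ p₁, dist_comm p₃ p₁, h₁₃, h₂₃] at this
    rw [cos_pi_div_three]
    refine mul_left_cancel₀ (pow_pos hd 2).ne' ?_
    linear_combination this / 2
  have hangle : ∠ p₂ p₁ p₃ = π / 3 :=
    injOn_cos ⟨angle_nonneg _ _ _, angle_le_pi _ _ _⟩ ⟨by positivity, by linarith [pi_pos]⟩ hcos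
  rw [h₁₃, hangle, sin_pi_div_three]
  ring

end

-- Cramer's rule for `z` in the basis `x, y` of the plane, paired with `t`.
theorem inner_mul_gram_eq (x y z t : Pt) :
    ⟪z, t⟫ * (⟪x, x⟫ * ⟪y, y⟫ - ⟪x, y⟫ ^ 2) =
      ⟪x, t⟫ * (⟪y, y⟫ * ⟪x, z⟫ - ⟪x, y⟫ * ⟪y, z⟫)
        + ⟪y, t⟫ * (⟪x, x⟫ * ⟪y, z⟫ - ⟪x, y⟫ * ⟪x, z⟫) := by
  simp only [PiLp.inner_apply, Fin.sum_univ_two, RCLike.inner_apply, conj_trivial]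
  ring

theorem norm_proj_sub_proj_eq_norm_mul_sin {x y : Pt} (hx : x ≠ 0) (hy : y ≠ 0) (z : Pt) :
    ‖(⟪z, x⟫ / ‖x‖ ^ 2) • x - (⟪z, y⟫ / ‖y‖ ^ 2) • y‖ =
      ‖z‖ * sin (InnerProductGeometry.angle y x) := by
  have hx' : ‖x‖ ≠ 0 := norm_ne_zero_iff.2 hx
  have hy' : ‖y‖ ≠ 0 := norm_ne_zero_iff.2 hy
  have hgram := inner_mul_gram_eq x y z z
  have hsin := sin_angle_mul_norm_mul_norm_sq y x
  rw [real_inner_comm x y] at hsin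
  simp only [real_inner_self_eq_norm_sq, real_inner_comm z x, real_inner_comm z y] at hgram
  have hsin0 : 0 ≤ sin (InnerProductGeometry.angle y x) :=
    sin_nonneg_of_nonneg_of_le_pi (InnerProductGeometry.angle_nonneg _ _)
      (InnerProductGeometry.angle_le_pi _ _)
  refine (pow_left_inj₀ (norm_nonneg _) (by positivity) two_ne_zero).1 ?_
  rw [norm_sub_sq_real, norm_smul, norm_smul, real_inner_smul_left, real_inner_smul_right,
    Real.norm_eq_abs, Real.norm_eq_abs, mul_pow, mul_pow, sq_abs, sq_abs]
  field_simp
  linear_combination -hgram - ‖z‖ ^ 2 * hsin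

theorem dist_feet_eq_dist_mul_sin_angle {A B C S P Q : Pt} (hAC : A ≠ C) (hBC : B ≠ C)
    (hP : Collinear ℝ ({P, B, C} : Set Pt)) (hSP : ⟪S - P, C - B⟫ = 0)
    (hQ : Collinear ℝ ({Q, C, A} : Set Pt)) (hSQ : ⟪S - Q, A - C⟫ = 0) :
    dist P Q = dist S C * sin (∠ A C B) := by
  rw [Set.pair_comm] at hQ
  have hSQ' : ⟪S - Q, C - A⟫ = 0 := by rw [← neg_sub A C, inner_neg_right, hSQ, neg_zero]
  rw [eq_inner_div_smul_add_of_collinear hP hBC hSP, eq_inner_div_smul_add_of_collinear hQ hAC hSQ',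
    dist_eq_norm, add_sub_add_right_eq_sub,
    norm_proj_sub_proj_eq_norm_mul_sin (sub_ne_zero.2 hBC) (sub_ne_zero.2 hAC), dist_eq_norm]
  rfl

-- `p = AB²`, `q = AC²`, `r = ⟪AB, AC⟫`, `k = AB · AC · sin A`, `L = AS²`, `X = ⟪AB, AS⟫`,
-- `Y = ⟪AC, AS⟫`, `T = ⟪AS, AO⟫` for the circumcentre `O`.
theorem isodynamic_gram_identity {p q r k L X Y T : ℝ} (hp : 0 < p) (hk : k ^ 2 = p * q - r ^ 2)
    (hk0 : 0 < k) (hL : 0 ≤ L)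
    (hgram : L * (p * q - r ^ 2) = q * X ^ 2 - 2 * r * X * Y + p * Y ^ 2)
    (hT : 2 * (p * q - r ^ 2) * T = p * (q * X - r * Y) + q * (p * Y - r * X))
    (hSB : (L - 2 * X + p) * q = (L - 2 * Y + q) * p)
    (hSA : L * (p + q - 2 * r) = (L - 2 * Y + q) * p)
    (hLT : L < 2 * T) :
    L * (p + q - r + √3 * k) = p * q := by
  have hD : 0 < p * q - r ^ 2 := hk ▸ pow_pos hk0 2
  have hq : 0 < q := by nlinarith [sq_nonneg r]
  have ha : 0 < p + q - 2 * r := by nlinarith [sq_nonneg (p - q), mul_pos hp hq]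
  have hX : 2 * q * X = p * q + L * (2 * r - p) := by linear_combination hSA - hSB
  have hY : 2 * p * Y = p * q - L * (q - 2 * r) := by linear_combination hSA
  have hsq : (p * q - (p + q - r) * L) ^ 2 = (√3 * k * L) ^ 2 := by
    have : (p + q - 2 * r) * ((p * q - (p + q - r) * L) ^ 2 - 3 * (p * q - r ^ 2) * L ^ 2) = 0 := by
      linear_combination (-p * (2 * q * X + (p * q + L * (2 * r - p))) + 4 * r * p * Y) * hX
        + (2 * r * (p * q + L * (2 * r - p)) - q * (2 * p * Y + (p * q - L * (q - 2 * r)))) * hY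
        - 4 * p * q * hgram
    rw [mul_pow, mul_pow, sq_sqrt zero_le_three, hk]
    linear_combination (mul_eq_zero.1 this).resolve_left ha.ne'
  have hpos : 0 < p * q - (p + q - r) * L := by
    have : (p + q - 2 * r) * (p * q - (p + q - r) * L) = 2 * (p * q - r ^ 2) * (2 * T - L) := by
      linear_combination -(p - r) * hX - (q - r) * hY - 2 * hT
    exact pos_of_mul_pos_right (this ▸ by nlinarith) ha.le
  have := (pow_left_inj₀ hpos.le (by positivity) two_ne_zero).1 hsq
  linear_combination -this

theorem dist_sq_mul_eq_of_isFirstIsodynamic {A B C S : Pt}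
    (hABC : AffineIndependent ℝ ![A, B, C]) (hS : IsFirstIsodynamic A B C S) :
    dist S A ^ 2 * (dist B C ^ 2 + dist C A ^ 2 + dist A B ^ 2
      + 2 * √3 * (dist C A * dist A B * sin (∠ B A C))) = 2 * dist C A ^ 2 * dist A B ^ 2 := by
  obtain ⟨hSB, hSA, -, O, ρ, hOA, hOB, hOC, hOS⟩ := hS
  have hd (X Y : Pt) : dist X Y ^ 2 = ‖X - A‖ ^ 2 - 2 * ⟪X - A, Y - A⟫ + ‖Y - A‖ ^ 2 := by
    rw [dist_eq_norm, ← sub_sub_sub_cancel_right X Y A, norm_sub_sq_real]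
  have hdA (X : Pt) : dist X A = ‖X - A‖ := dist_eq_norm X A
  have hdA' (X : Pt) : dist A X = ‖X - A‖ := dist_comm A X ▸ dist_eq_norm X A
  have hsin : 0 < sin (∠ B A C) := by
    refine sin_pos_of_not_collinear ?_
    rw [Set.insert_comm]
    exact affineIndependent_iff_not_collinear_set.1 hABC
  have hAB : 0 < ‖B - A‖ :=
    norm_pos_iff.2 (sub_ne_zero.2 (hABC.injective.ne (show (1 : Fin 3) ≠ 0 by decide)))
  have hAC : 0 < ‖C - A‖ :=
    norm_pos_iff.2 (sub_ne_zero.2 (hABC.injective.ne (show (2 : Fin 3) ≠ 0 by decide)))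
  have hOB' : 2 * ⟪B - A, O - A⟫ = ‖B - A‖ ^ 2 := by
    have := hd O B
    rw [hOB, ← hOA, hdA, real_inner_comm] at this
    linear_combination this
  have hOC' : 2 * ⟪C - A, O - A⟫ = ‖C - A‖ ^ 2 := by
    have := hd O C
    rw [hOC, ← hOA, hdA, real_inner_comm] at this
    linear_combination this
  have hOS' : ‖S - A‖ ^ 2 < 2 * ⟪S - A, O - A⟫ := by
    have := hd O S
    have h := pow_lt_pow_left₀ (hOA ▸ hOS) dist_nonneg two_ne_zero
    rw [hdA] at h
    rw [real_inner_comm (S - A) (O - A)] at this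
    linarith
  have hSB' := congrArg (· ^ 2) hSB
  have hSA' := congrArg (· ^ 2) hSA
  simp only [mul_pow, hd S B, hd S C, hd B C, hdA, hdA', real_inner_comm (B - A) (S - A),
    real_inner_comm (C - A) (S - A)] at hSB' hSA'
  have hgram := inner_mul_gram_eq (B - A) (C - A) (S - A) (S - A)
  have hcirc := inner_mul_gram_eq (B - A) (C - A) (S - A) (O - A)
  simp only [real_inner_self_eq_norm_sq] at hgram hcirc
  have key := isodynamic_gram_identity (p := ‖B - A‖ ^ 2) (q := ‖C - A‖ ^ 2)
    (r := ⟪B - A, C - A⟫) (k := sin (∠ B A C) * (‖B - A‖ * ‖C - A‖)) (L := ‖S - A‖ ^ 2)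
    (X := ⟪B - A, S - A⟫) (Y := ⟪C - A, S - A⟫) (T := ⟪S - A, O - A⟫) (by positivity)
    (sin_angle_mul_norm_mul_norm_sq (B - A) (C - A)) (by positivity) (by positivity)
    (by linear_combination hgram)
    (by linear_combination 2 * hcirc
      + (‖C - A‖ ^ 2 * ⟪B - A, S - A⟫ - ⟪B - A, C - A⟫ * ⟪C - A, S - A⟫) * hOB'
      + (‖B - A‖ ^ 2 * ⟪C - A, S - A⟫ - ⟪B - A, C - A⟫ * ⟪B - A, S - A⟫) * hOC')
    (by linear_combination hSB') (by linear_combination hSA') hOS'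
  rw [hd B C, hdA, hdA, hdA']
  linear_combination 2 * key

theorem stmt13 (A B C S P Q R : Pt) (a b c K : ℝ)
    (hABC : AffineIndependent ℝ ![A, B, C])
    (hS : IsFirstIsodynamic A B C S)
    (hP : Collinear ℝ ({P, B, C} : Set Pt) ∧ (inner ℝ (S - P) (C - B) : ℝ) = 0)
    (hQ : Collinear ℝ ({Q, C, A} : Set Pt) ∧ (inner ℝ (S - Q) (A - C) : ℝ) = 0)
    (hR : Collinear ℝ ({R, A, B} : Set Pt) ∧ (inner ℝ (S - R) (B - A) : ℝ) = 0)
    (ha : a = dist B C) (hb : b = dist C A) (hc : c = dist A B)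
    (hK : K = b * c * Real.sin (∠ B A C) / 2) :
    dist P Q * dist P R * Real.sin (∠ Q P R) / 2 =
      2 * K ^ 2 * Real.sqrt 3 / (a ^ 2 + b ^ 2 + c ^ 2 + 4 * K * Real.sqrt 3) := by
  have hne (i j : Fin 3) (hij : i ≠ j) : ![A, B, C] i ≠ ![A, B, C] j := hABC.injective.ne hij
  have hAB : A ≠ B := hne 0 1 (by decide)
  have hAC : A ≠ C := hne 0 2 (by decide)
  have hBC : B ≠ C := hne 1 2 (by decide)
  have hPQ := dist_feet_eq_dist_mul_sin_angle hAC hBC hP.1 hP.2 hQ.1 hQ.2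
  have hQR := dist_feet_eq_dist_mul_sin_angle hAB.symm hAC.symm hQ.1 hQ.2 hR.1 hR.2
  have hRP := dist_feet_eq_dist_mul_sin_angle hBC.symm hAB hR.1 hR.2 hP.1 hP.2
  have hC := dist_mul_sin_angle_eq_of_dist_mul_dist_eq_s13 hS.2.1 hBC
  have hB := dist_mul_sin_angle_eq_of_dist_mul_dist_eq_s13 hS.2.2.1 hBC.symm
  rw [angle_comm A B C, angle_comm C A B] at hB
  rw [dist_mul_dist_mul_sin_angle_div_two_of_dist_eq (by rw [dist_comm, hRP, hB, hPQ, hC])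
    (by rw [hQR, hPQ, hC]), hPQ, hC]
  have hSA := dist_sq_mul_eq_of_isFirstIsodynamic hABC hS
  have hsin : 0 ≤ sin (∠ B A C) :=
    sin_nonneg_of_nonneg_of_le_pi (angle_nonneg _ _ _) (angle_le_pi _ _ _)
  subst ha hb hc hK
  have hK : 0 ≤ dist C A * dist A B * sin (∠ B A C) * √3 :=
    mul_nonneg (mul_nonneg (by positivity) hsin) (sqrt_nonneg 3)
  rw [eq_div_iff (by nlinarith [pow_pos (dist_pos.2 hBC) 2, sq_nonneg (dist C A)])]
  linear_combination √3 / 4 * sin (∠ B A C) ^ 2 * hSA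
end
end

section
/- If the cevians from A, B, C through the first isodynamic point S are extended to meet the circumcircle again at P, Q, R respectively, then triangle PQR is equilateral. -/
open EuclideanGeometry Real

noncomputable section

/-!
For a point `S` off a circle of centre `O`, the chord through `S` with one end `X` has its other
end at `X' = S + (pow S / SX²) • (X - S)`, where `pow S = OS² - r²` (Vieta on the quadratic
cutting the line with the circle). Up to a point reflection in `S` this is an inversion, so
`X'Y' = |pow S| · XY / (SX · SY)`. The Apollonius conditions defining `S` say exactly
`AB · SC = BC · SA = CA · SB`, which makes the three sides of `PQR` equal.
-/

section

variable {V P : Type*} [NormedAddCommGroup V] [InnerProductSpace ℝ V] [MetricSpace P]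
  [NormedAddTorsor V P]

theorem dist_div_norm_sq_smul_abs {x y : V} (hx : x ≠ 0) (hy : y ≠ 0) (k : ℝ) :
    dist ((k / ‖x‖ ^ 2) • x) ((k / ‖y‖ ^ 2) • y) = |k| / (‖x‖ * ‖y‖) * dist x y := by
  have hx' : ‖x‖ ≠ 0 := norm_ne_zero_iff.mpr hx
  have hy' : ‖y‖ ≠ 0 := norm_ne_zero_iff.mpr hy
  have hsq : dist ((k / ‖x‖ ^ 2) • x) ((k / ‖y‖ ^ 2) • y) ^ 2
      = (|k| / (‖x‖ * ‖y‖) * dist x y) ^ 2 := by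
    simp only [dist_eq_norm, mul_pow, div_pow, sq_abs, norm_sub_sq_real, norm_smul,
      real_inner_smul_left, real_inner_smul_right, Real.norm_eq_abs, sq_abs]
    field_simp
    ring
  exact (pow_left_inj₀ dist_nonneg (by positivity) two_ne_zero).mp hsq

namespace EuclideanGeometry.Sphere

theorem vsub_eq_power_div_smul_vsub {s : Sphere P} {p a q : P} (ha : a ∈ s) (hq : q ∈ s)
    (hqa : q ≠ a) (hpa : p ≠ a) (hline : q ∈ line[ℝ, p, a]) :
    q -ᵥ p = (s.power p / dist a p ^ 2) • (a -ᵥ p) := by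
  rw [← vsub_vadd q p, vadd_left_mem_affineSpan_pair] at hline
  obtain ⟨t, ht⟩ := hline
  set u := a -ᵥ p
  set w := p -ᵥ s.center
  have hu : ‖u‖ ≠ 0 := by simpa [u, sub_eq_zero] using hpa.symm
  have hA : ‖u + w‖ ^ 2 = s.radius ^ 2 := by
    rw [← mem_sphere.mp ha, dist_eq_norm_vsub V, vsub_add_vsub_cancel]
  have hQ : ‖t • u + w‖ ^ 2 = s.radius ^ 2 := by
    rw [← mem_sphere.mp hq, dist_eq_norm_vsub V, ht, vsub_add_vsub_cancel]
  have ht1 : t - 1 ≠ 0 := by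
    rintro h
    obtain rfl : t = 1 := by linarith
    exact hqa (by simpa [u] using ht.symm)
  -- `1` and `t` are the roots of `‖x • u + w‖² = r²`, whose product is `power p / ‖u‖²`.
  have hroots : (t - 1) * (t * ‖u‖ ^ 2 - s.power p) = 0 := by
    rw [norm_add_sq_real] at hA hQ
    rw [power, dist_eq_norm_vsub V]
    simp only [norm_smul, real_inner_smul_left, Real.norm_eq_abs, mul_pow, sq_abs] at hQ
    linear_combination hQ - t * hA
  have ht' : t * ‖u‖ ^ 2 = s.power p := by
    linear_combination (mul_eq_zero.mp hroots).resolve_left ht1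
  rw [← ht, dist_eq_norm_vsub V, ← ht', mul_div_cancel_right₀ _ (pow_ne_zero 2 hu)]

theorem dist_eq_abs_power_div_mul_dist {s : Sphere P} {p a b q₁ q₂ : P} (ha : a ∈ s)
    (hb : b ∈ s) (hq₁ : q₁ ∈ s) (hq₂ : q₂ ∈ s) (hq₁a : q₁ ≠ a) (hq₂b : q₂ ≠ b) (hpa : p ≠ a)
    (hpb : p ≠ b) (h₁ : q₁ ∈ line[ℝ, p, a]) (h₂ : q₂ ∈ line[ℝ, p, b]) :
    dist q₁ q₂ = |s.power p| / (dist a p * dist b p) * dist a b := by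
  rw [← dist_vsub_cancel_right q₁ q₂ p, ← dist_vsub_cancel_right a b p,
    vsub_eq_power_div_smul_vsub ha hq₁ hq₁a hpa h₁, vsub_eq_power_div_smul_vsub hb hq₂ hq₂b hpb h₂,
    dist_eq_norm_vsub V a p, dist_eq_norm_vsub V b p]
  exact dist_div_norm_sq_smul_abs (vsub_ne_zero.mpr hpa.symm) (vsub_ne_zero.mpr hpb.symm) _

end EuclideanGeometry.Sphere

end

namespace IsFirstIsodynamic

variable {A B C S : Pt}

theorem ne_vertex (h : IsFirstIsodynamic A B C S) : S ≠ A ∧ S ≠ B ∧ S ≠ C := by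
  obtain ⟨-, -, -, O, r, hA, hB, hC, hS⟩ := h
  refine ⟨?_, ?_, ?_⟩ <;> rintro rfl <;> linarith

theorem dist_mul_dist_eq (h : IsFirstIsodynamic A B C S) :
    dist A B * dist C S = dist B C * dist A S ∧ dist B C * dist A S = dist C A * dist B S := by
  obtain ⟨-, hB, hC, -⟩ := h
  simp only [dist_comm S, dist_comm C B, dist_comm B A] at hB hC
  exact ⟨by linarith, by linarith⟩

end IsFirstIsodynamic

theorem stmt15_general (A B C S O P Q R : Pt) (r : ℝ)
    (hS : IsFirstIsodynamic A B C S)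
    (hOA : dist O A = r) (hOB : dist O B = r) (hOC : dist O C = r)
    (hP : P ≠ A ∧ dist O P = r ∧ Collinear ℝ ({A, S, P} : Set Pt))
    (hQ : Q ≠ B ∧ dist O Q = r ∧ Collinear ℝ ({B, S, Q} : Set Pt))
    (hR : R ≠ C ∧ dist O R = r ∧ Collinear ℝ ({C, S, R} : Set Pt)) :
    dist P Q = dist Q R ∧ dist Q R = dist R P := by
  obtain ⟨hSA, hSB, hSC⟩ := hS.ne_vertex
  obtain ⟨hAB_BC, hBC_CA⟩ := hS.dist_mul_dist_eq
  obtain ⟨hPA, hOP, hAP⟩ := hP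
  obtain ⟨hQB, hOQ, hBQ⟩ := hQ
  obtain ⟨hRC, hOR, hCR⟩ := hR
  set s : Sphere Pt := ⟨O, r⟩
  have chord {X Y : Pt} (hSX : S ≠ X) (hXY : Collinear ℝ ({X, S, Y} : Set Pt)) :
      Y ∈ line[ℝ, S, X] :=
    hXY.mem_affineSpan_of_mem_of_ne (by simp) (by simp) (by simp) hSX
  have hPQ := s.dist_eq_abs_power_div_mul_dist (mem_sphere'.mpr hOA) (mem_sphere'.mpr hOB)
    (mem_sphere'.mpr hOP) (mem_sphere'.mpr hOQ) hPA hQB hSA hSB (chord hSA hAP) (chord hSB hBQ)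
  have hQR := s.dist_eq_abs_power_div_mul_dist (mem_sphere'.mpr hOB) (mem_sphere'.mpr hOC)
    (mem_sphere'.mpr hOQ) (mem_sphere'.mpr hOR) hQB hRC hSB hSC (chord hSB hBQ) (chord hSC hCR)
  have hRP := s.dist_eq_abs_power_div_mul_dist (mem_sphere'.mpr hOC) (mem_sphere'.mpr hOA)
    (mem_sphere'.mpr hOR) (mem_sphere'.mpr hOP) hRC hPA hSC hSA (chord hSC hCR) (chord hSA hAP)
  have hAS := dist_pos.mpr hSA.symm
  have hBS := dist_pos.mpr hSB.symm
  have hCS := dist_pos.mpr hSC.symm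
  rw [hPQ, hQR, hRP]
  simp only [div_mul_eq_mul_div]
  constructor <;> rw [div_eq_div_iff (by positivity) (by positivity)]
  · linear_combination |s.power S| * dist B S * hAB_BC
  · linear_combination |s.power S| * dist C S * hBC_CA

theorem stmt15 (A B C S O P Q R : Pt) (r : ℝ)
    (hABC : AffineIndependent ℝ ![A, B, C])
    (hS : IsFirstIsodynamic A B C S)
    (hOA : dist O A = r) (hOB : dist O B = r) (hOC : dist O C = r)
    (hP : P ≠ A ∧ dist O P = r ∧ Collinear ℝ ({A, S, P} : Set Pt))
    (hQ : Q ≠ B ∧ dist O Q = r ∧ Collinear ℝ ({B, S, Q} : Set Pt))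
    (hR : R ≠ C ∧ dist O R = r ∧ Collinear ℝ ({C, S, R} : Set Pt)) :
    dist P Q = dist Q R ∧ dist Q R = dist R P :=
  stmt15_general A B C S O P Q R r hS hOA hOB hOC hP hQ hR
end
end

section
/- Inversion with center at the first isodynamic point S of triangle ABC maps the vertices A, B, C to three points forming an equilateral triangle. -/
/-!
Inversion with center `S` and radius `k` scales a segment by `k² / (SX · SY)`:
`A'B' = k² · AB / (SA · SB)`. Hence `A'B' = B'C'` amounts to `SC · AB = SA · BC`, and the
Apollonius-circle conditions defining the isodynamic point say exactly that the three
products `SA · BC`, `SB · CA`, `SC · AB` agree.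
-/

open EuclideanGeometry Real

noncomputable section

section Inversion

variable {V P : Type*} [NormedAddCommGroup V] [InnerProductSpace ℝ V] [MetricSpace P]
  [NormedAddTorsor V P]

theorem inversion_eq_add_smul_sub (c x : V) (R : ℝ) :
    inversion c R x = c + (R ^ 2 / dist x c ^ 2) • (x - c) := by
  rw [inversion, div_pow, vsub_eq_sub, vadd_eq_add, add_comm]

theorem dist_inversion_inversion_eq_of_mul_dist_eq {c x y z : P} (hx : x ≠ c) (hy : y ≠ c)
    (hz : z ≠ c) (R : ℝ) (h : dist z c * dist x y = dist x c * dist y z) :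
    dist (inversion c R x) (inversion c R y) = dist (inversion c R y) (inversion c R z) := by
  have hxc : dist x c ≠ 0 := dist_ne_zero.2 hx
  have hyc : dist y c ≠ 0 := dist_ne_zero.2 hy
  have hzc : dist z c ≠ 0 := dist_ne_zero.2 hz
  rw [dist_inversion_inversion hx hy, dist_inversion_inversion hy hz]
  field_simp
  linear_combination R ^ 2 * h

end Inversion

theorem stmt16_general (A B C S : Pt)
    (hS : IsFirstIsodynamic A B C S)
    (hSA : S ≠ A) (hSB : S ≠ B) (hSC : S ≠ C) :
    ∀ k : ℝ, 0 < k → ∀ A' B' C' : Pt,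
      A' = S + (k ^ 2 / dist A S ^ 2) • (A - S) →
      B' = S + (k ^ 2 / dist B S ^ 2) • (B - S) →
      C' = S + (k ^ 2 / dist C S ^ 2) • (C - S) →
      dist A' B' = dist B' C' ∧ dist B' C' = dist C' A' := by
  intro k _ A' B' C' hA' hB' hC'
  simp only [← inversion_eq_add_smul_sub] at hA' hB' hC'
  subst hA' hB' hC'
  obtain ⟨-, hBC, hCA, -⟩ := hS
  simp only [dist_comm S, dist_comm B A, dist_comm C B] at hBC hCA
  exact ⟨dist_inversion_inversion_eq_of_mul_dist_eq hSA.symm hSB.symm hSC.symm k hBC.symm,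
    dist_inversion_inversion_eq_of_mul_dist_eq hSB.symm hSC.symm hSA.symm k hCA⟩

theorem stmt16 (A B C S : Pt)
    (hABC : AffineIndependent ℝ ![A, B, C])
    (hS : IsFirstIsodynamic A B C S)
    (hSA : S ≠ A) (hSB : S ≠ B) (hSC : S ≠ C) :
    ∀ k : ℝ, 0 < k → ∀ A' B' C' : Pt,
      A' = S + (k ^ 2 / dist A S ^ 2) • (A - S) →
      B' = S + (k ^ 2 / dist B S ^ 2) • (B - S) →
      C' = S + (k ^ 2 / dist C S ^ 2) • (C - S) →
      dist A' B' = dist B' C' ∧ dist B' C' = dist C' A' :=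
  stmt16_general A B C S hS hSA hSB hSC
end
end
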